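/- arXiv:math/0607276 — 8 statements merged into one kernel-verified Lean document; each statement's English description precedes it below -/
import Mathlib

section
/- Let f : ℝ² → ℝ be continuously differentiable and let σ ∈ ℝ. Then the function φ_σ is continuously differentiable and satisfies the transport equation cos σ · ∂φ_σ/∂x₁ (x₁,x₂) + sin σ · ∂φ_σ/∂x₂ (x₁,x₂) = f(x₁,x₂)/2 for every (x₁,x₂) ∈ ℝ². -/
open Real MeasureTheory

/-- The function `φ_σ` appearing in the description of the β-surfaces of the
Petean metric `2(dx₁dx₃ + dx₂dx₄) + f(x₁,x₂)(dx₁² + dx₂²)`: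
`φ_σ(x₁,x₂) = (1/2)∫₀^λ f(t cos σ − μ sin σ, t sin σ + μ cos σ) dt` with
`λ = x₁ cos σ + x₂ sin σ` and `μ = −x₁ sin σ + x₂ cos σ`. -/
noncomputable def phiPet (f : ℝ × ℝ → ℝ) (σ : ℝ) (x : ℝ × ℝ) : ℝ :=
  (1 / 2) * ∫ t in (0 : ℝ)..(x.1 * Real.cos σ + x.2 * Real.sin σ),
      f (t * Real.cos σ - (-x.1 * Real.sin σ + x.2 * Real.cos σ) * Real.sin σ,
         t * Real.sin σ + (-x.1 * Real.sin σ + x.2 * Real.cos σ) * Real.cos σ)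

/-!
In the coordinates `(λ, μ)` rotated by `σ`, `φ_σ = ½ F(λ, μ)` with `F(a, b) = ∫₀^a g(t, b) dt`,
where `g` is `f` read in the rotated coordinates. `F` is `C¹`: its derivative in `a` is `g` by
the fundamental theorem of calculus, and in `b` it is obtained by differentiating under the
integral sign. The rotation sends the transport direction `(cos σ, sin σ)` to `(1, 0)`, so the
left-hand side of the transport equation is `½ ∂F/∂a (λ, μ) = ½ g(λ, μ) = f(x₁, x₂)/2`.
-/

open ContinuousLinearMap

section ParametricPrimitive

variable {E : Type*} [NormedAddCommGroup E] [NormedSpace ℝ E] {g : ℝ × ℝ → E}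

lemma hasDerivAt_integral_snd (hg : ContDiff ℝ 1 g) (a₀ a b : ℝ) :
    HasDerivAt (fun b => ∫ t in a₀..a, g (t, b)) (∫ t in a₀..a, fderiv ℝ g (t, b) (0, 1)) b := by
  have hg' : Continuous fun q => fderiv ℝ g q (0, 1) :=
    (hg.continuous_fderiv one_ne_zero).clm_apply continuous_const
  obtain ⟨C, hC⟩ := (isCompact_uIcc.prod (isCompact_closedBall b 1)).exists_bound_of_continuousOn
    hg'.continuousOn
  refine (intervalIntegral.hasDerivAt_integral_of_dominated_loc_of_deriv_le
    (F := fun x t => g (t, x)) (F' := fun x t => fderiv ℝ g (t, x) (0, 1)) (bound := fun _ => C)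
    (Metric.ball_mem_nhds b one_pos) (.of_forall fun x => ?_) ?_ ?_ ?_
    (intervalIntegrable_const (μ := volume)) (.of_forall fun t _ x _ => ?_)).2
  · exact (hg.continuous.comp (.prodMk_left x)).aestronglyMeasurable.restrict
  · exact (hg.continuous.comp (.prodMk_left b)).intervalIntegrable _ _
  · exact (hg'.comp (.prodMk_left b)).aestronglyMeasurable.restrict
  · exact .of_forall fun t ht x hx =>
      hC (t, x) ⟨Set.uIoc_subset_uIcc ht, Metric.ball_subset_closedBall hx⟩
  · exact ((hg.differentiable one_ne_zero _).hasFDerivAt.comp x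
      (hasFDerivAt_prodMk_right t x)).hasDerivAt

variable [CompleteSpace E]

lemma hasFDerivAt_integral_upper_of_continuous (hg : Continuous g) (a b : ℝ) :
    HasFDerivAt (fun p : ℝ × ℝ => ∫ t in a..p.1, g (t, p.2))
      ((fst ℝ ℝ ℝ).smulRight (g (a, b))) (a, b) := by
  refine .of_isLittleO (Asymptotics.isLittleO_iff.2 fun ε hε => ?_)
  obtain ⟨δ, hδ, hgδ⟩ := Metric.continuous_iff.1 hg (a, b) ε hε
  filter_upwards [Metric.ball_mem_nhds (a, b) hδ] with p hp
  have hdiff : (∫ t in a..p.1, g (t, p.2)) - (∫ t in a..a, g (t, (a, b).2))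
      - (fst ℝ ℝ ℝ).smulRight (g (a, b)) (p - (a, b))
      = ∫ t in a..p.1, (g (t, p.2) - g (a, b)) := by
    have hint : IntervalIntegrable (fun t => g (t, p.2)) volume a p.1 :=
      (hg.comp (.prodMk_left p.2)).intervalIntegrable _ _
    rw [intervalIntegral.integral_same, intervalIntegral.integral_sub hint
      intervalIntegrable_const, intervalIntegral.integral_const]
    simp
  have hclose : ∀ t ∈ Set.uIoc a p.1, ‖g (t, p.2) - g (a, b)‖ ≤ ε := by
    intro t ht
    have hta : dist t a ≤ dist p.1 a := by
      simpa only [dist_comm] using Real.dist_left_le_of_mem_uIcc (Set.uIoc_subset_uIcc ht)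
    rw [← dist_eq_norm]
    refine (hgδ _ (lt_of_le_of_lt ?_ hp)).le
    rw [Prod.dist_eq, Prod.dist_eq]
    exact max_le_max hta le_rfl
  rw [hdiff]
  calc ‖∫ t in a..p.1, (g (t, p.2) - g (a, b))‖ ≤ ε * |p.1 - a| :=
        intervalIntegral.norm_integral_le_of_norm_le_const hclose
    _ ≤ ε * ‖p - (a, b)‖ := by
        gcongr
        exact norm_fst_le (p - (a, b))

variable (g) in
noncomputable def paramPrimitive (p : ℝ × ℝ) : E := ∫ t in (0 : ℝ)..p.1, g (t, p.2)

lemma hasFDerivAt_paramPrimitive (hg : ContDiff ℝ 1 g) (p : ℝ × ℝ) :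
    HasFDerivAt (paramPrimitive g) ((fst ℝ ℝ ℝ).smulRight (g p) +
      (snd ℝ ℝ ℝ).smulRight (∫ t in (0 : ℝ)..p.1, fderiv ℝ g (t, p.2) (0, 1))) p := by
  obtain ⟨a, b⟩ := p
  have hsplit : paramPrimitive g =
      (fun p : ℝ × ℝ => ∫ t in a..p.1, g (t, p.2)) + fun p => ∫ t in (0 : ℝ)..a, g (t, p.2) := by
    ext p
    have hint : ∀ c d, IntervalIntegrable (fun t => g (t, p.2)) volume c d :=
      fun _ _ => (hg.continuous.comp (.prodMk_left p.2)).intervalIntegrable _ _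
    rw [Pi.add_apply, add_comm]
    exact (intervalIntegral.integral_add_adjacent_intervals (hint _ _) (hint _ _)).symm
  have hsnd : HasFDerivAt (fun p : ℝ × ℝ => ∫ t in (0 : ℝ)..a, g (t, p.2))
      ((snd ℝ ℝ ℝ).smulRight (∫ t in (0 : ℝ)..a, fderiv ℝ g (t, b) (0, 1))) (a, b) := by
    have h := (hasDerivAt_integral_snd hg 0 a b).hasFDerivAt.comp (a, b) (hasFDerivAt_snd (𝕜 := ℝ))
    exact h.congr_fderiv (ContinuousLinearMap.ext fun v => by simp)
  rw [hsplit]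
  exact (hasFDerivAt_integral_upper_of_continuous hg.continuous a b).add hsnd

lemma contDiff_paramPrimitive (hg : ContDiff ℝ 1 g) : ContDiff ℝ 1 (paramPrimitive g) := by
  refine contDiff_one_iff_fderiv.2
    ⟨fun p => (hasFDerivAt_paramPrimitive hg p).differentiableAt, ?_⟩
  rw [funext fun p => (hasFDerivAt_paramPrimitive hg p).fderiv]
  have hI : Continuous fun p : ℝ × ℝ => ∫ t in (0 : ℝ)..p.1, fderiv ℝ g (t, p.2) (0, 1) :=
    intervalIntegral.continuous_parametric_intervalIntegral_of_continuous
      (f := fun p t => fderiv ℝ g (t, p.2) (0, 1))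
      (((hg.continuous_fderiv one_ne_zero).clm_apply continuous_const).comp
        (continuous_snd.prodMk (continuous_snd.comp continuous_fst)))
      continuous_fst
  fun_prop

lemma fderiv_paramPrimitive_apply_one_zero (hg : ContDiff ℝ 1 g) (p : ℝ × ℝ) :
    fderiv ℝ (paramPrimitive g) p (1, 0) = g p := by
  simp [(hasFDerivAt_paramPrimitive hg p).fderiv]

end ParametricPrimitive

/-- `rotCoords σ x` is the pair `(λ, μ)` of the definition of `phiPet`. -/
noncomputable def rotCoords (σ : ℝ) : ℝ × ℝ →L[ℝ] ℝ × ℝ :=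
  (cos σ • fst ℝ ℝ ℝ + sin σ • snd ℝ ℝ ℝ).prod (-sin σ • fst ℝ ℝ ℝ + cos σ • snd ℝ ℝ ℝ)

lemma rotCoords_apply (σ : ℝ) (x : ℝ × ℝ) :
    rotCoords σ x = (x.1 * cos σ + x.2 * sin σ, -x.1 * sin σ + x.2 * cos σ) := by
  simp only [rotCoords, prod_apply, add_apply, smul_apply, coe_fst', coe_snd', smul_eq_mul]
  ext <;> ring

lemma rotCoords_neg_rotCoords (σ : ℝ) (x : ℝ × ℝ) : rotCoords (-σ) (rotCoords σ x) = x := by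
  have hcs := cos_sq_add_sin_sq σ
  simp only [rotCoords_apply, cos_neg, sin_neg]
  ext
  · linear_combination x.1 * hcs
  · linear_combination x.2 * hcs

lemma rotCoords_cos_sin (σ : ℝ) : rotCoords σ (cos σ, sin σ) = (1, 0) := by
  simp only [rotCoords_apply]
  ext
  · linear_combination cos_sq_add_sin_sq σ
  · ring

lemma phiPet_eq_paramPrimitive (f : ℝ × ℝ → ℝ) (σ : ℝ) :
    phiPet f σ = fun x => 1 / 2 * paramPrimitive (f ∘ rotCoords (-σ)) (rotCoords σ x) := by
  ext x
  simp only [phiPet, paramPrimitive, Function.comp_apply, rotCoords_apply, cos_neg, sin_neg]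
  congr 2 with t
  congr 2 <;> ring

/-- If `f : ℝ² → ℝ` is `C¹`, then `φ_σ` is `C¹` and satisfies the transport equation
`cos σ · ∂φ_σ/∂x₁ + sin σ · ∂φ_σ/∂x₂ = f/2`. -/
theorem statement0 (f : ℝ × ℝ → ℝ) (hf : ContDiff ℝ 1 f) (σ : ℝ) :
    ContDiff ℝ 1 (phiPet f σ) ∧
    ∀ x : ℝ × ℝ,
      Real.cos σ * fderiv ℝ (phiPet f σ) x (1, 0) +
        Real.sin σ * fderiv ℝ (phiPet f σ) x (0, 1) = f x / 2 := by
  set F := paramPrimitive (f ∘ rotCoords (-σ))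
  have hg : ContDiff ℝ 1 (f ∘ rotCoords (-σ)) := hf.comp (rotCoords (-σ)).contDiff
  have hF : ContDiff ℝ 1 F := contDiff_paramPrimitive hg
  rw [phiPet_eq_paramPrimitive]
  refine ⟨contDiff_const.mul (hF.comp (rotCoords σ).contDiff), fun x => ?_⟩
  set D := fderiv ℝ F (rotCoords σ x)
  have hD : HasFDerivAt (fun x => 1 / 2 * F (rotCoords σ x))
      ((1 / 2 : ℝ) • D.comp (rotCoords σ)) x :=
    ((hF.differentiable one_ne_zero _).hasFDerivAt.comp x (rotCoords σ).hasFDerivAt).const_mul _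
  have hdir : ((cos σ, sin σ) : ℝ × ℝ) = cos σ • (1, 0) + sin σ • (0, 1) := by ext <;> simp
  calc cos σ * fderiv ℝ _ x (1, 0) + sin σ * fderiv ℝ _ x (0, 1)
      = 1 / 2 * D (rotCoords σ (cos σ, sin σ)) := by
        rw [hD.fderiv, hdir]
        simp only [map_add, map_smul, smul_apply, coe_comp, Function.comp_apply, smul_eq_mul]
        ring
    _ = f x / 2 := by
        rw [rotCoords_cos_sin, fderiv_paramPrimitive_apply_one_zero hg, Function.comp_apply,
          rotCoords_neg_rotCoords]
        ring
end

section
/- Let f : ℝ² → ℝ be continuously differentiable and let σ ∈ ℝ. Define F : ℝ⁴ → ℝ² by F(x₁,x₂,x₃,x₄) = (−x₁ sin σ + x₂ cos σ, x₃ cos σ + x₄ sin σ + φ_σ(x₁,x₂)). Then F is continuously differentiable, its derivative DF(x) : ℝ⁴ → ℝ² is surjective at every point x, and the kernel of DF(x) is exactly the two-dimensional span of 𝔫₁(f(x₁,x₂),σ) and 𝔫₂(σ). (Hence the level sets of F are the β-surfaces of the Petean metric associated with f.) -/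
open Real MeasureTheory

/-- `𝔫₁(c,σ) = (cos σ, sin σ, −(c/2)cos σ, −(c/2)sin σ)`. -/
noncomputable def frakn₁ (c σ : ℝ) : Fin 4 → ℝ :=
  ![Real.cos σ, Real.sin σ, -(c / 2) * Real.cos σ, -(c / 2) * Real.sin σ]

/-- `𝔫₂(σ) = (0, 0, sin σ, −cos σ)`. -/
noncomputable def frakn₂ (σ : ℝ) : Fin 4 → ℝ :=
  ![0, 0, Real.sin σ, -Real.cos σ]

/-- The map `F(x₁,x₂,x₃,x₄) = (−x₁ sin σ + x₂ cos σ, x₃ cos σ + x₄ sin σ + φ_σ(x₁,x₂))`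
whose level sets are the β-surfaces of the Petean metric associated with `f`. -/
noncomputable def Fmap (f : ℝ × ℝ → ℝ) (σ : ℝ) (x : Fin 4 → ℝ) : ℝ × ℝ :=
  (-(x 0) * Real.sin σ + x 1 * Real.cos σ,
    x 2 * Real.cos σ + x 3 * Real.sin σ + phiPet f σ (x 0, x 1))

/-!
In the coordinates `λ = x₁ cos σ + x₂ sin σ`, `μ = -x₁ sin σ + x₂ cos σ`, `φ_σ` is half of the
parametric primitive `(λ, μ) ↦ ∫₀^λ f(t (cos σ, sin σ) + μ (-sin σ, cos σ)) dt`. This primitive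
is `C¹` because both partial derivatives exist and are continuous: the fundamental theorem of
calculus in `λ`, differentiation under the integral sign in `μ`. At `t = λ` the integrand is
`f(x₁, x₂)` itself, so `dφ_σ = (f(x₁, x₂) / 2) dλ + A dμ` for some `A`, and `DF(x)` is the map
`v ↦ (dμ(v), v₃ cos σ + v₄ sin σ + (f(x₁, x₂) / 2) dλ(v) + A dμ(v))`. That map is onto and its
kernel is spanned by `𝔫₁` and `𝔫₂`, by solving the two equations explicitly.
-/

open ContinuousLinearMap

section ParametricPrimitive

variable {E F : Type*} [NormedAddCommGroup E] [NormedSpace ℝ E]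
  [NormedAddCommGroup F] [NormedSpace ℝ F] {g : ℝ × E → F}

theorem continuous_fderiv_comp_inr (hg : ContDiff ℝ 1 g) :
    Continuous fun q => fderiv ℝ g q ∘L inr ℝ ℝ E :=
  (hg.continuous_fderiv one_ne_zero).clm_comp continuous_const

theorem continuous_parametric_primitive_fderiv_comp_inr (hg : ContDiff ℝ 1 g) (a₀ : ℝ) :
    Continuous fun p : ℝ × E => ∫ t in a₀..p.1, fderiv ℝ g (t, p.2) ∘L inr ℝ ℝ E :=
  intervalIntegral.continuous_parametric_intervalIntegral_of_continuous
    (f := fun (q : ℝ × E) t => fderiv ℝ g (t, q.2) ∘L inr ℝ ℝ E)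
    ((continuous_fderiv_comp_inr hg).comp
      (continuous_snd.prodMk (continuous_snd.comp continuous_fst)))
    continuous_fst

variable [ProperSpace E]

theorem hasFDerivAt_parametric_intervalIntegral (hg : ContDiff ℝ 1 g) (a b : ℝ) (m₀ : E) :
    HasFDerivAt (fun m => ∫ t in a..b, g (t, m))
      (∫ t in a..b, fderiv ℝ g (t, m₀) ∘L inr ℝ ℝ E) m₀ := by
  obtain ⟨M, hM⟩ := (isCompact_uIcc.prod (isCompact_closedBall m₀ 1)).exists_bound_of_continuousOn
    (continuous_fderiv_comp_inr hg).continuousOn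
  refine intervalIntegral.hasFDerivAt_integral_of_dominated_of_fderiv_le (μ := volume)
    (F := fun m t => g (t, m)) (F' := fun m t => fderiv ℝ g (t, m) ∘L inr ℝ ℝ E)
    (bound := fun _ => M)
    (Metric.ball_mem_nhds m₀ one_pos) ?_ ?_ ?_ ?_ intervalIntegrable_const ?_
  · exact .of_forall fun m => (hg.continuous.comp (.prodMk_left m)).aestronglyMeasurable
  · exact (hg.continuous.comp (.prodMk_left m₀)).intervalIntegrable _ _
  · exact ((continuous_fderiv_comp_inr hg).comp (.prodMk_left m₀)).aestronglyMeasurable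
  · exact .of_forall fun t ht m hm =>
      hM (t, m) ⟨Set.uIoc_subset_uIcc ht, Metric.ball_subset_closedBall hm⟩
  · exact .of_forall fun t _ m _ =>
      ((hg.differentiable one_ne_zero).differentiableAt.hasFDerivAt).comp m
        (hasFDerivAt_prodMk_right t m)

variable [CompleteSpace F]

theorem hasStrictFDerivAt_parametric_primitive (hg : ContDiff ℝ 1 g) (a₀ : ℝ) (p : ℝ × E) :
    HasStrictFDerivAt (fun q : ℝ × E => ∫ t in a₀..q.1, g (t, q.2))
      ((toSpanSingleton ℝ (g p)).coprod (∫ t in a₀..p.1, fderiv ℝ g (t, p.2) ∘L inr ℝ ℝ E)) p := by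
  refine hasStrictFDerivAt_uncurry_coprod (f := fun a m => ∫ t in a₀..a, g (t, m))
    (f₁ := fun a m => toSpanSingleton ℝ (g (a, m)))
    (f₂ := fun a m => ∫ t in a₀..a, fderiv ℝ g (t, m) ∘L inr ℝ ℝ E)
    (.of_forall fun q => ?_) (.of_forall fun q => ?_) ?_ ?_
  · show HasFDerivAt _ (toSpanSingleton ℝ (g q)) q.1
    rw [← smulRight_one_eq_toSpanSingleton]
    exact ((hg.continuous.comp (.prodMk_left q.2)).integral_hasStrictDerivAt a₀ q.1).hasDerivAt
      |>.hasFDerivAt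
  · exact hasFDerivAt_parametric_intervalIntegral hg a₀ q.1 q.2
  · exact (toSpanSingletonCLE.continuous.comp hg.continuous).continuousAt
  · exact (continuous_parametric_primitive_fderiv_comp_inr hg a₀).continuousAt

theorem contDiff_parametric_primitive (hg : ContDiff ℝ 1 g) (a₀ : ℝ) :
    ContDiff ℝ 1 (fun q : ℝ × E => ∫ t in a₀..q.1, g (t, q.2)) := by
  rw [contDiff_one_iff_fderiv]
  refine ⟨fun p => (hasStrictFDerivAt_parametric_primitive hg a₀ p).differentiableAt, ?_⟩
  rw [funext fun p => (hasStrictFDerivAt_parametric_primitive hg a₀ p).hasFDerivAt.fderiv]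
  have hg₁ : Continuous fun p => toSpanSingleton ℝ (g p) :=
    toSpanSingletonCLE.continuous.comp hg.continuous
  exact (coprodEquivL ℝ).continuous.comp
    (hg₁.prodMk (continuous_parametric_primitive_fderiv_comp_inr hg a₀))

end ParametricPrimitive

noncomputable def rotatedCoords (σ : ℝ) : ℝ × ℝ →L[ℝ] ℝ × ℝ :=
  (cos σ • fst ℝ ℝ ℝ + sin σ • snd ℝ ℝ ℝ).prod (-sin σ • fst ℝ ℝ ℝ + cos σ • snd ℝ ℝ ℝ)

theorem rotatedCoords_apply (σ : ℝ) (y : ℝ × ℝ) :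
    rotatedCoords σ y = (y.1 * cos σ + y.2 * sin σ, -y.1 * sin σ + y.2 * cos σ) := by
  ext <;> simp only [rotatedCoords, prod_apply, add_apply, smul_apply, coe_fst', coe_snd',
    smul_eq_mul, neg_mul] <;> ring

noncomputable def inRotatedFrame (f : ℝ × ℝ → ℝ) (σ : ℝ) (q : ℝ × ℝ) : ℝ :=
  f (q.1 * cos σ - q.2 * sin σ, q.1 * sin σ + q.2 * cos σ)

theorem inRotatedFrame_rotatedCoords (f : ℝ × ℝ → ℝ) (σ : ℝ) (y : ℝ × ℝ) :
    inRotatedFrame f σ (rotatedCoords σ y) = f y := by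
  rw [rotatedCoords_apply, inRotatedFrame]
  congr 1
  ext
  · linear_combination y.1 * sin_sq_add_cos_sq σ
  · linear_combination y.2 * sin_sq_add_cos_sq σ

theorem ContDiff.inRotatedFrame {f : ℝ × ℝ → ℝ} (hf : ContDiff ℝ 1 f) (σ : ℝ) :
    ContDiff ℝ 1 (inRotatedFrame f σ) :=
  hf.comp (by fun_prop)

theorem phiPet_apply (f : ℝ × ℝ → ℝ) (σ : ℝ) (y : ℝ × ℝ) :
    phiPet f σ y = 1 / 2 * ∫ t in (0 : ℝ)..(rotatedCoords σ y).1,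
      inRotatedFrame f σ (t, (rotatedCoords σ y).2) := by
  rw [rotatedCoords_apply]
  rfl

section Fmap

variable {f : ℝ × ℝ → ℝ} {σ : ℝ}

theorem contDiff_phiPet (hf : ContDiff ℝ 1 f) : ContDiff ℝ 1 (phiPet f σ) := by
  rw [funext (phiPet_apply f σ)]
  exact contDiff_const.mul
    ((contDiff_parametric_primitive (hf.inRotatedFrame σ) 0).comp (rotatedCoords σ).contDiff)

theorem exists_fderiv_phiPet_apply (hf : ContDiff ℝ 1 f) (y : ℝ × ℝ) :
    ∃ A : ℝ, ∀ v : ℝ × ℝ, fderiv ℝ (phiPet f σ) y v =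
      f y / 2 * (v.1 * cos σ + v.2 * sin σ) + A * (-v.1 * sin σ + v.2 * cos σ) := by
  have h := ((((hasStrictFDerivAt_parametric_primitive (hf.inRotatedFrame σ) 0
    (rotatedCoords σ y)).hasFDerivAt.comp y (rotatedCoords σ).hasFDerivAt).const_mul (1 / 2 : ℝ))
    |>.congr_of_eventuallyEq (.of_forall (phiPet_apply f σ)))
  rw [inRotatedFrame_rotatedCoords] at h
  set K : ℝ →L[ℝ] ℝ := ∫ t in (0 : ℝ)..(rotatedCoords σ y).1,
    fderiv ℝ (inRotatedFrame f σ) (t, (rotatedCoords σ y).2) ∘L inr ℝ ℝ ℝ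
  have hK (r : ℝ) : K r = r * K 1 := by simpa using K.map_smul r 1
  refine ⟨K 1 / 2, fun v => ?_⟩
  rw [h.fderiv]
  simp only [FunLike.coe_smul, Pi.smul_apply, coe_comp, Function.comp_apply, coprod_apply,
    toSpanSingleton_apply, rotatedCoords_apply, smul_eq_mul]
  rw [hK]
  ring

theorem contDiff_Fmap (hf : ContDiff ℝ 1 f) : ContDiff ℝ 1 (Fmap f σ) := by
  have := contDiff_phiPet (σ := σ) hf
  unfold Fmap
  fun_prop

theorem fderiv_Fmap_apply (hf : ContDiff ℝ 1 f) (x v : Fin 4 → ℝ) :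
    fderiv ℝ (Fmap f σ) x v = (-v 0 * sin σ + v 1 * cos σ,
      v 2 * cos σ + v 3 * sin σ + fderiv ℝ (phiPet f σ) (x 0, x 1) (v 0, v 1)) := by
  have hφ := ((contDiff_phiPet (σ := σ) hf).differentiable one_ne_zero (x 0, x 1)).hasFDerivAt
  have hp (i : Fin 4) : HasFDerivAt (fun y : Fin 4 → ℝ => y i) (proj (R := ℝ) i) x :=
    hasFDerivAt_apply i x
  have hF : HasFDerivAt (Fmap f σ) _ x :=
    (((hp 0).neg.mul_const (sin σ)).add ((hp 1).mul_const (cos σ))).prodMk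
      ((((hp 2).mul_const (cos σ)).add ((hp 3).mul_const (sin σ))).add
        (hφ.comp (g := phiPet f σ) x ((hp 0).prodMk (hp 1))))
  rw [hF.fderiv]
  simp only [prod_apply, add_apply, FunLike.coe_smul, Pi.smul_apply, neg_apply, proj_apply,
    smul_eq_mul, coe_comp, Function.comp_apply]
  ext <;> ring

end Fmap

theorem surjective_and_ker_eq_span_of_apply (T : (Fin 4 → ℝ) →ₗ[ℝ] ℝ × ℝ) (c A σ : ℝ)
    (hT : ∀ v, T v = (-v 0 * sin σ + v 1 * cos σ, v 2 * cos σ + v 3 * sin σ +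
      (c / 2 * (v 0 * cos σ + v 1 * sin σ) + A * (-v 0 * sin σ + v 1 * cos σ)))) :
    Function.Surjective T ∧
      LinearMap.ker T = Submodule.span ℝ ({frakn₁ c σ, frakn₂ σ} : Set (Fin 4 → ℝ)) := by
  have pyth := sin_sq_add_cos_sq σ
  refine ⟨fun ⟨u, w⟩ => ⟨![-(u * sin σ), u * cos σ, (w - A * u) * cos σ, (w - A * u) * sin σ],
    ?_⟩, ?_⟩
  · rw [hT]
    ext <;> simp only [Fin.isValue, Matrix.cons_val, Matrix.cons_val_zero, Matrix.cons_val_one,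
      neg_mul, neg_neg]
    · linear_combination u * pyth
    · linear_combination w * pyth
  ext v
  simp only [LinearMap.mem_ker, hT, Submodule.mem_span_pair, Prod.mk_eq_zero]
  constructor
  · rintro ⟨h₁, h₂⟩
    refine ⟨v 0 * cos σ + v 1 * sin σ, v 2 * sin σ - v 3 * cos σ, ?_⟩
    ext i
    fin_cases i <;> simp only [frakn₁, frakn₂, Pi.add_apply, Pi.smul_apply, smul_eq_mul,
      Matrix.cons_val, Matrix.cons_val_zero, Matrix.cons_val_one, Fin.reduceFinMk, Fin.zero_eta,
      Fin.mk_one, Fin.isValue]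
    · linear_combination sin σ * h₁ + v 0 * pyth
    · linear_combination -cos σ * h₁ + v 1 * pyth
    · linear_combination -cos σ * h₂ + A * cos σ * h₁ + v 2 * pyth
    · linear_combination -sin σ * h₂ + A * sin σ * h₁ + v 3 * pyth
  · rintro ⟨a, b, rfl⟩
    simp only [frakn₁, frakn₂, Pi.add_apply, Pi.smul_apply, smul_eq_mul, Matrix.cons_val,
      Matrix.cons_val_zero, Matrix.cons_val_one, Fin.isValue]
    constructor <;> ring

theorem statement1 (f : ℝ × ℝ → ℝ) (hf : ContDiff ℝ 1 f) (σ : ℝ) :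
    ContDiff ℝ 1 (Fmap f σ) ∧
    ∀ x : Fin 4 → ℝ,
      Function.Surjective (fderiv ℝ (Fmap f σ) x) ∧
      LinearMap.ker (fderiv ℝ (Fmap f σ) x : (Fin 4 → ℝ) →ₗ[ℝ] ℝ × ℝ) =
        Submodule.span ℝ ({frakn₁ (f (x 0, x 1)) σ, frakn₂ σ} : Set (Fin 4 → ℝ)) := by
  refine ⟨contDiff_Fmap hf, fun x => ?_⟩
  obtain ⟨A, hA⟩ := exists_fderiv_phiPet_apply (σ := σ) hf (x 0, x 1)
  exact surjective_and_ker_eq_span_of_apply _ (f (x 0, x 1)) A σ fun v => by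
    rw [ContinuousLinearMap.coe_coe, fderiv_Fmap_apply hf, hA]
end

section
/- Let f : ℝ² → ℝ be a Schwartz function. Then for every σ ∈ ℝ there exists a Schwartz function g : ℝ → ℝ such that g(μ) = f̂(σ,μ) for all μ ∈ ℝ; in particular μ ↦ f̂(σ,μ) is smooth and, together with all its derivatives, decays faster than any inverse power of |μ|. -/
/-!
In coordinates rotated by `σ`, `μ ↦ f̂(σ,μ)` is the integral of the Schwartz function `f ∘ R_σ`
over the first variable. For any Schwartz `G` on `ℝ²`, `|μ|^k ‖G(t,μ)‖ ≲ (1 + t²)⁻¹` uniformly in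
`μ`, so differentiation under the integral sign gives `(d/dμ)ⁿ ∫ G(t,μ) dt = ∫ ∂_μⁿ G(t,μ) dt`,
and the same bound applied to `∂_μⁿ G` makes `μ ↦ ∫ G(t,μ) dt` a Schwartz function.
-/

open Real MeasureTheory

/-- The Radon transform `f̂(σ,μ) = ∫_ℝ f(t cos σ − μ sin σ, t sin σ + μ cos σ) dt`. -/
noncomputable def radon (f : ℝ × ℝ → ℝ) (σ μ : ℝ) : ℝ :=
  ∫ t : ℝ, f (t * Real.cos σ - μ * Real.sin σ, t * Real.sin σ + μ * Real.cos σ)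

open LineDeriv

noncomputable def planeRotation (σ : ℝ) : (ℝ × ℝ) ≃L[ℝ] ℝ × ℝ :=
  Complex.equivRealProdCLM.symm.trans
    ((rotation (Circle.exp σ)).toContinuousLinearEquiv.trans Complex.equivRealProdCLM)

theorem planeRotation_apply (σ : ℝ) (p : ℝ × ℝ) :
    planeRotation σ p = (p.1 * cos σ - p.2 * sin σ, p.1 * sin σ + p.2 * cos σ) := by
  simp only [planeRotation, ContinuousLinearEquiv.trans_apply,
    LinearIsometryEquiv.coe_toContinuousLinearEquiv, rotation_apply, Circle.coe_exp,
    Complex.equivRealProdCLM_apply, Complex.mul_re, Complex.mul_im, Complex.exp_re, Complex.exp_im,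
    Complex.ofReal_re, Complex.ofReal_im, Complex.I_re, Complex.I_im, mul_zero, mul_one, sub_self,
    exp_zero, add_zero, one_mul, Complex.equivRealProdCLM_symm_apply_re,
    Complex.equivRealProdCLM_symm_apply_im, Prod.mk.injEq]
  constructor <;> ring

namespace SchwartzMap

local notation "∂₂" => lineDerivOp ((0 : ℝ), (1 : ℝ))

variable {V : Type*} [NormedAddCommGroup V] [NormedSpace ℝ V]

theorem norm_pow_mul_le_inv_one_add_sq (G : 𝓢(ℝ × ℝ, V)) (k : ℕ) :
    ∃ C, ∀ t μ : ℝ, ‖μ‖ ^ k * ‖G (t, μ)‖ ≤ C * (1 + t ^ 2)⁻¹ := by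
  refine ⟨SchwartzMap.seminorm ℝ k 0 G + SchwartzMap.seminorm ℝ (k + 2) 0 G, fun t μ => ?_⟩
  have hμ : ‖μ‖ ≤ ‖(t, μ)‖ := norm_snd_le (t, μ)
  have ht : t ^ 2 ≤ ‖(t, μ)‖ ^ 2 := by
    rw [← sq_abs, ← Real.norm_eq_abs]; gcongr; exact norm_fst_le (t, μ)
  have hk := G.norm_pow_mul_le_seminorm ℝ k (t, μ)
  have hk2 := G.norm_pow_mul_le_seminorm ℝ (k + 2) (t, μ)
  rw [← div_eq_mul_inv, le_div_iff₀ (by positivity)]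
  calc ‖μ‖ ^ k * ‖G (t, μ)‖ * (1 + t ^ 2)
      = ‖μ‖ ^ k * ‖G (t, μ)‖ + t ^ 2 * (‖μ‖ ^ k * ‖G (t, μ)‖) := by ring
    _ ≤ ‖(t, μ)‖ ^ k * ‖G (t, μ)‖ + ‖(t, μ)‖ ^ 2 * (‖(t, μ)‖ ^ k * ‖G (t, μ)‖) := by gcongr
    _ ≤ _ := by rw [← mul_assoc, ← pow_add, add_comm 2]; exact add_le_add hk hk2

theorem integrable_comp_prodMk_right (G : 𝓢(ℝ × ℝ, V)) (μ : ℝ) :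
    Integrable (fun t : ℝ => G (t, μ)) := by
  obtain ⟨C, hC⟩ := G.norm_pow_mul_le_inv_one_add_sq 0
  refine (integrable_inv_one_add_sq.const_mul C).mono' (by fun_prop) (.of_forall fun t => ?_)
  simpa using hC t μ

theorem hasDerivAt_integral_fst (G : 𝓢(ℝ × ℝ, V)) (μ₀ : ℝ) :
    HasDerivAt (fun μ => ∫ t, G (t, μ)) (∫ t, ∂₂ G (t, μ₀)) μ₀ := by
  obtain ⟨C, hC⟩ := (∂₂ G).norm_pow_mul_le_inv_one_add_sq 0
  refine (hasDerivAt_integral_of_dominated_loc_of_deriv_le (bound := fun t => C * (1 + t ^ 2)⁻¹)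
    Filter.univ_mem (.of_forall fun μ => (G.integrable_comp_prodMk_right μ).aestronglyMeasurable)
    (G.integrable_comp_prodMk_right μ₀)
    ((∂₂ G).integrable_comp_prodMk_right μ₀).aestronglyMeasurable
    (.of_forall fun t μ _ => by simpa using hC t μ)
    (integrable_inv_one_add_sq.const_mul C) (.of_forall fun t μ _ => ?_)).2
  have hline : HasDerivAt (fun μ : ℝ => (t, μ)) ((0 : ℝ), (1 : ℝ)) μ :=
    (hasDerivAt_const μ t).prodMk (hasDerivAt_id μ)
  exact (G.hasFDerivAt (t, μ)).comp_hasDerivAt μ hline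

theorem iteratedDeriv_integral_fst (G : 𝓢(ℝ × ℝ, V)) (n : ℕ) :
    iteratedDeriv n (fun μ => ∫ t, G (t, μ)) = fun μ => ∫ t, ∂₂^[n] G (t, μ) := by
  induction n generalizing G with
  | zero => rfl
  | succ n ih =>
    rw [iteratedDeriv_succ', funext fun μ => (G.hasDerivAt_integral_fst μ).deriv, ih]
    rfl

noncomputable def integralFst (G : 𝓢(ℝ × ℝ, V)) : 𝓢(ℝ, V) where
  toFun μ := ∫ t, G (t, μ)
  smooth' := contDiff_of_differentiable_iteratedDeriv fun n _ => by
    rw [iteratedDeriv_integral_fst]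
    exact fun μ => (hasDerivAt_integral_fst _ μ).differentiableAt
  decay' k n := by
    obtain ⟨C, hC⟩ := (∂₂^[n] G).norm_pow_mul_le_inv_one_add_sq k
    refine ⟨C * ∫ t : ℝ, (1 + t ^ 2)⁻¹, fun μ => ?_⟩
    rw [norm_iteratedFDeriv_eq_norm_iteratedDeriv, iteratedDeriv_integral_fst, ← integral_const_mul]
    calc ‖μ‖ ^ k * ‖∫ t, ∂₂^[n] G (t, μ)‖
        = ‖∫ t, ‖μ‖ ^ k • ∂₂^[n] G (t, μ)‖ := by
          rw [integral_smul, norm_smul, norm_pow, norm_norm]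
      _ ≤ ∫ t, C * (1 + t ^ 2)⁻¹ :=
          norm_integral_le_of_norm_le (integrable_inv_one_add_sq.const_mul C)
            (.of_forall fun t => by simpa [norm_smul] using hC t μ)

@[simp]
theorem integralFst_apply (G : 𝓢(ℝ × ℝ, V)) (μ : ℝ) : G.integralFst μ = ∫ t, G (t, μ) := rfl

end SchwartzMap

/-- For a Schwartz function `f` on ℝ² and any angle `σ`, the Radon transform
`μ ↦ f̂(σ,μ)` is (given by) a Schwartz function of `μ`. -/
theorem statement5 (f : SchwartzMap (ℝ × ℝ) ℝ) (σ : ℝ) :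
    ∃ g : SchwartzMap ℝ ℝ, ∀ μ : ℝ, g μ = radon (⇑f) σ μ := by
  refine ⟨(SchwartzMap.compCLMOfContinuousLinearEquiv ℝ (planeRotation σ) f).integralFst,
    fun μ => ?_⟩
  simp [radon, planeRotation_apply]
end

section
/- The Radon transform is injective on Schwartz functions: if f : ℝ² → ℝ is a Schwartz function and f̂(σ,μ) = 0 for all σ, μ ∈ ℝ, then f is identically zero. In particular, the Radon transform is one-to-one on the set of axisymmetric Schwartz functions on ℝ². -/
/-!
Identify `ℝ²` with `ℂ`, so that the rotation in the Radon transform becomes multiplication by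
`a = exp (σ i)`. Rotating and then applying Fubini gives the Fourier slice theorem: the Fourier
transform of `f` at `a * (r i)` is the one-dimensional Fourier transform of `μ ↦ f̂(σ, μ)` at `r`.
Every point of `ℂ` has this form, so two functions with the same Radon transform have the same
Fourier transform, and Fourier inversion separates continuous integrable functions.
-/

open Real MeasureTheory

/-- A function `f : ℝ² → ℝ` is axisymmetric if it is invariant under all rotations. -/
def Axisym (f : ℝ × ℝ → ℝ) : Prop :=
  ∀ τ x₁ x₂ : ℝ,
    f (x₁ * Real.cos τ - x₂ * Real.sin τ, x₁ * Real.sin τ + x₂ * Real.cos τ) = f (x₁, x₂)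

open FourierTransform Complex
open scoped RealInnerProductSpace

section FourierInjective

variable {V E : Type*} [NormedAddCommGroup V] [InnerProductSpace ℝ V] [FiniteDimensional ℝ V]
  [MeasurableSpace V] [BorelSpace V] [NormedAddCommGroup E] [NormedSpace ℂ E]

theorem Real.fourier_sub {f g : V → E} (hf : Integrable f) (hg : Integrable g) :
    𝓕 (f - g) = 𝓕 f - 𝓕 g := by
  ext w
  simp only [Real.fourier_eq, Pi.sub_apply, smul_sub]
  exact integral_sub ((fourierIntegral_convergent_iff w).2 hf)
    ((fourierIntegral_convergent_iff w).2 hg)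

theorem Continuous.eq_of_fourier_eq [CompleteSpace E] {f g : V → E}
    (hfc : Continuous f) (hgc : Continuous g) (hf : Integrable f) (hg : Integrable g)
    (h : 𝓕 f = 𝓕 g) : f = g := by
  have hzero : 𝓕 (f - g) = 0 := by rw [Real.fourier_sub hf hg, h, sub_self]
  have hinv := (hfc.sub hgc).fourierInv_fourier_eq (hf.sub hg)
    (by rw [hzero]; exact integrable_zero _ _ _)
  rw [hzero] at hinv
  refine sub_eq_zero.1 (hinv.symm.trans ?_)
  ext w
  simp [Real.fourierInv_eq]

end FourierInjective

theorem Complex.fourier_circle_mul_real_mul_I_eq_integral {E : Type*} [NormedAddCommGroup E]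
    [NormedSpace ℂ E] (F : ℂ → E) (hF : Integrable F) (a : Circle) (r : ℝ) :
    𝓕 F ((a : ℂ) * (r * I)) = ∫ μ : ℝ, 𝐞 (-(r * μ)) • ∫ t : ℝ, F ((a : ℂ) * (t + μ * I)) := by
  let ψ : ℝ × ℝ ≃ᵐ ℂ :=
    measurableEquivRealProd.symm.trans (rotation a).toHomeomorph.toMeasurableEquiv
  have hψ : MeasurePreserving ψ :=
    (rotation a).measurePreserving.comp volume_preserving_equiv_real_prod.symm
  have hψ_apply (p : ℝ × ℝ) : ψ p = (a : ℂ) * (p.1 + p.2 * I) := by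
    simp [ψ, rotation_apply, mk_eq_add_mul_I]
  have hinner (p : ℝ × ℝ) : ⟪ψ p, (a : ℂ) * (r * I)⟫ = r * p.2 := by
    rw [hψ_apply, ← rotation_apply, ← rotation_apply, LinearIsometryEquiv.inner_map_map]
    simp [Complex.inner]
  have hint : Integrable (fun p : ℝ × ℝ ↦ 𝐞 (-(r * p.2)) • F (ψ p)) (volume.prod volume) := by
    rw [← Measure.volume_eq_prod]
    simpa only [Function.comp_def, hinner] using
      (hψ.integrable_comp_emb ψ.measurableEmbedding).2
        ((fourierIntegral_convergent_iff ((a : ℂ) * (r * I))).2 hF)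
  calc 𝓕 F ((a : ℂ) * (r * I)) = ∫ p : ℝ × ℝ, 𝐞 (-⟪ψ p, (a : ℂ) * (r * I)⟫) • F (ψ p) :=
        (hψ.integral_comp' _).symm
    _ = ∫ μ : ℝ, ∫ t : ℝ, 𝐞 (-(r * μ)) • F (ψ (t, μ)) := by
        simp_rw [hinner]
        rw [Measure.volume_eq_prod]
        exact integral_prod_symm _ hint
    _ = _ := by
        congr 1 with μ
        simp only [Circle.smul_def, hψ_apply]
        exact integral_smul _ _

theorem Complex.exists_eq_circle_exp_mul_real_mul_I (w : ℂ) :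
    ∃ σ r : ℝ, w = Circle.exp σ * (r * I) := by
  refine ⟨arg (-I * w), ‖-I * w‖, ?_⟩
  have hpolar := norm_mul_exp_arg_mul_I (-I * w)
  rw [Circle.coe_exp]
  linear_combination (-I) * hpolar + w * I_sq

theorem integrable_ofReal_comp_re_im {f : ℝ × ℝ → ℝ} (hf : Integrable f) :
    Integrable (fun z : ℂ ↦ (f (z.re, z.im) : ℂ)) :=
  ((volume_preserving_equiv_real_prod.integrable_comp_emb
    measurableEquivRealProd.measurableEmbedding).2 hf).ofReal

theorem fourier_eq_integral_radon {f : ℝ × ℝ → ℝ} (hf : Integrable f) (σ r : ℝ) :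
    𝓕 (fun z : ℂ ↦ (f (z.re, z.im) : ℂ)) (Circle.exp σ * (r * I)) =
      ∫ μ : ℝ, 𝐞 (-(r * μ)) • (radon f σ μ : ℂ) := by
  rw [fourier_circle_mul_real_mul_I_eq_integral _ (integrable_ofReal_comp_re_im hf)]
  congr 1 with μ
  rw [radon, ← integral_complex_ofReal]
  congr 2 with t
  simp only [Circle.coe_exp, exp_mul_I, ← ofReal_cos, ← ofReal_sin, mul_re, mul_im, add_re,
    add_im, ofReal_re, ofReal_im, I_re, I_im]
  congr 3 <;> ring

/-- Comparing the Fourier transforms of `f` and `g` rather than that of `f - g` avoids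
`radon (f - g) = radon f - radon g`, which needs `f` and `g` integrable on every line. -/
theorem radon_injective_of_continuous_integrable {f g : ℝ × ℝ → ℝ} (hfc : Continuous f)
    (hgc : Continuous g) (hf : Integrable f) (hg : Integrable g) (h : radon f = radon g) :
    f = g := by
  have hfourier :
      𝓕 (fun z : ℂ ↦ (f (z.re, z.im) : ℂ)) = 𝓕 (fun z : ℂ ↦ (g (z.re, z.im) : ℂ)) := by
    ext w
    obtain ⟨σ, r, rfl⟩ := exists_eq_circle_exp_mul_real_mul_I w
    rw [fourier_eq_integral_radon hf, fourier_eq_integral_radon hg, h]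
  have hlift := Continuous.eq_of_fourier_eq (by fun_prop) (by fun_prop)
    (integrable_ofReal_comp_re_im hf) (integrable_ofReal_comp_re_im hg) hfourier
  ext x
  simpa using congrFun hlift (x.1 + x.2 * I)

/-- The Radon transform is injective on Schwartz functions: if the Radon transform of a
Schwartz function on ℝ² vanishes identically then the function is identically zero.
In particular, the Radon transform is one-to-one on axisymmetric Schwartz functions. -/
theorem statement7 :
    (∀ f : SchwartzMap (ℝ × ℝ) ℝ,
      (∀ σ μ : ℝ, radon (⇑f) σ μ = 0) → ∀ x : ℝ × ℝ, f x = 0) ∧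
    (∀ f g : SchwartzMap (ℝ × ℝ) ℝ, Axisym ⇑f → Axisym ⇑g →
      (∀ σ μ : ℝ, radon (⇑f) σ μ = radon (⇑g) σ μ) → f = g) := by
  refine ⟨fun f hf ↦ congrFun ?_, fun f g _ _ h ↦ DFunLike.coe_injective ?_⟩
  · refine radon_injective_of_continuous_integrable f.continuous continuous_const f.integrable
      (integrable_zero _ _ _) ?_
    ext σ μ
    rw [hf σ μ, radon, integral_zero]
  · exact radon_injective_of_continuous_integrable f.continuous g.continuous f.integrable
      g.integrable (funext₂ h)
end

section
/- (Sokhotski–Plemelj boundary value formula.) Let h : ℝ → ℂ be a Schwartz function and let x ∈ ℝ. Then the principal value L = pv∫ h(μ)/(μ−x) dμ exists (i.e. the limit as δ → 0⁺ of ∫_{|μ−x|>δ} h(μ)/(μ−x) dμ exists), and the Cauchy integrals from the upper half-plane converge to it with an extra residue term: lim_{ε→0⁺} ∫_ℝ h(μ)/(μ − x − iε) dμ = L + iπ h(x). Equivalently, the function G(ξ) = (1/πi)∫_ℝ h(μ)/(μ−ξ) dμ, defined for Im ξ > 0, extends continuously to the real axis with boundary value (1/πi)·pv∫ h(μ)/(μ−x)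 dμ + h(x). -/
/-!
Write `h μ / z = ((μ - x) / z) • q μ + 1_{|μ - x| < 1} h x / z`, where
`q μ = (h μ - 1_{|μ - x| < 1} h x) / (μ - x)` (`regularizedQuotient h x`) is integrable because
`h` is Lipschitz near `x` and integrable away from it. For both `z = μ - x` (on `|μ - x| > δ`)
and `z = μ - x - iε` the weight in front of `q` has modulus at most `1` and tends to `1` off
`μ = x`, so by dominated convergence both first terms tend to `L = ∫ q`. The singular term
contributes `0` to the principal value, because `1_{δ < |μ - x| < 1} / (μ - x)` is odd about `x`,
and `h x ∫_{x-1}^{x+1} dμ / (μ - x - iε) = h x (log (1 - iε) - log (-1 - iε)) → iπ h x`.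
-/

open Real MeasureTheory Filter Topology Set Metric
open Complex (I)

section Integrals

variable {E : Type*} [NormedAddCommGroup E] [NormedSpace ℝ E]

theorem integral_eq_zero_of_apply_sub_eq_neg {f : ℝ → E} (a : ℝ) (hf : ∀ t, f (a - t) = -f t) :
    ∫ t, f t = 0 := by
  have h := integral_sub_left_eq_self f volume a
  simp only [hf, integral_neg] at h
  rw [neg_eq_iff_add_eq_zero, ← two_smul ℝ] at h
  exact (smul_eq_zero.mp h).resolve_left two_ne_zero

theorem tendsto_integral_smul_of_norm_le_one {α ι 𝕜 : Type*} [MeasurableSpace α] {ν : Measure α}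
    {l : Filter ι} [l.IsCountablyGenerated] [NormedField 𝕜] [NormedSpace 𝕜 E]
    {f : α → E} (hf : Integrable f ν) {w : ι → α → 𝕜}
    (hw_meas : ∀ᶠ t in l, AEStronglyMeasurable (w t) ν) (hw_le : ∀ᶠ t in l, ∀ᵐ a ∂ν, ‖w t a‖ ≤ 1)
    (hw_lim : ∀ᵐ a ∂ν, Tendsto (fun t => w t a) l (𝓝 1)) :
    Tendsto (fun t => ∫ a, w t a • f a ∂ν) l (𝓝 (∫ a, f a ∂ν)) := by
  refine tendsto_integral_filter_of_dominated_convergence (fun a => ‖f a‖)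
    (hw_meas.mono fun t ht => ht.smul hf.1) (hw_le.mono fun t ht => ?_) hf.norm ?_
  · filter_upwards [ht] with a ha
    rw [norm_smul]
    exact mul_le_of_le_one_left (norm_nonneg _) ha
  · filter_upwards [hw_lim] with a ha
    simpa using ha.smul_const (f a)

end Integrals

theorem MeasureTheory.Integrable.div_of_le_norm {α : Type*} [MeasurableSpace α] {ν : Measure α}
    {f z : α → ℂ} (hf : Integrable f ν) (hz : AEMeasurable z ν) {δ : ℝ} (hδ : 0 < δ)
    (hle : ∀ᵐ a ∂ν, δ ≤ ‖z a‖) : Integrable (fun a => f a / z a) ν := by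
  have hmeas : AEStronglyMeasurable (fun a => f a / z a) ν := by
    simp only [div_eq_mul_inv]
    exact hf.1.mul hz.inv.aestronglyMeasurable
  refine (hf.norm.mul_const δ⁻¹).mono' hmeas ?_
  filter_upwards [hle] with a ha
  rw [norm_div, div_eq_mul_inv]
  gcongr

theorem SchwartzMap.exists_lipschitzWith {F : Type*} [NormedAddCommGroup F] [NormedSpace ℝ F]
    (f : SchwartzMap ℝ F) : ∃ K, LipschitzWith K f := by
  obtain ⟨C, -, hC⟩ := (SchwartzMap.derivCLM ℝ F f).decay 0 0
  refine ⟨C.toNNReal, lipschitzWith_of_nnnorm_deriv_le f.differentiable fun t => ?_⟩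
  rw [← NNReal.coe_le_coe, coe_nnnorm]
  simpa using (hC t).trans (le_coe_toNNReal C)

theorem Complex.norm_ofReal_sub_ofReal (a b : ℝ) : ‖(a : ℂ) - b‖ = |a - b| := by
  rw [← Complex.ofReal_sub, Complex.norm_real, Real.norm_eq_abs]

theorem Complex.norm_ofReal_sub_le_norm_sub_mul_I (a b ε : ℝ) :
    ‖(a : ℂ) - b‖ ≤ ‖(a : ℂ) - b - ε * I‖ := by
  simpa [Complex.norm_ofReal_sub_ofReal] using Complex.abs_re_le_norm ((a : ℂ) - b - ε * I)

theorem Complex.abs_le_norm_sub_mul_I (a b ε : ℝ) : |ε| ≤ ‖(a : ℂ) - b - ε * I‖ := by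
  simpa using Complex.abs_im_le_norm ((a : ℂ) - b - ε * I)

theorem Complex.tendsto_sub_mul_I (c : ℂ) : Tendsto (fun ε : ℝ => c - ε * I) (𝓝[>] 0) (𝓝 c) := by
  simpa using ((by fun_prop : Continuous fun ε : ℝ => c - ε * I).tendsto 0).mono_left
    nhdsWithin_le_nhds

namespace Plemelj

variable (h : ℝ → ℂ) (x : ℝ)

noncomputable def regularizedQuotient (μ : ℝ) : ℂ :=
  (h μ - (ball x 1).indicator (fun _ => h x) μ) / ((μ : ℂ) - x)

theorem norm_regularizedQuotient_le {K : NNReal} (hlip : LipschitzWith K h) (μ : ℝ) :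
    ‖regularizedQuotient h x μ‖ ≤ (ball x 1).indicator (fun _ => (K : ℝ)) μ + ‖h μ‖ := by
  rw [regularizedQuotient, norm_div, Complex.norm_ofReal_sub_ofReal]
  by_cases hμ : μ ∈ ball x 1
  · rw [indicator_of_mem hμ, indicator_of_mem hμ]
    refine le_add_of_le_of_nonneg (div_le_of_le_mul₀ (abs_nonneg _) K.2 ?_) (norm_nonneg _)
    simpa [dist_eq_norm, Real.dist_eq] using hlip.dist_le_mul μ x
  · rw [indicator_of_notMem hμ, indicator_of_notMem hμ, sub_zero, zero_add]
    exact div_le_self (norm_nonneg _) (by simpa [Real.dist_eq] using hμ)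

theorem integrable_regularizedQuotient (hint : Integrable h) {K : NNReal}
    (hlip : LipschitzWith K h) : Integrable (regularizedQuotient h x) := by
  have hbound : Integrable fun μ => (ball x 1).indicator (fun _ => (K : ℝ)) μ + ‖h μ‖ :=
    ((integrableOn_const measure_ball_lt_top.ne).integrable_indicator measurableSet_ball).add
      hint.norm
  have hmeas : Measurable (regularizedQuotient h x) := by
    have hh : Measurable h := hlip.continuous.measurable
    have hind : Measurable ((ball x 1).indicator fun _ => h x) :=
      measurable_const.indicator measurableSet_ball
    unfold regularizedQuotient
    fun_prop
  exact hbound.mono' hmeas.aestronglyMeasurable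
    (ae_of_all _ (norm_regularizedQuotient_le h x hlip))

theorem div_sub_regularizedQuotient (μ : ℝ) :
    h μ / ((μ : ℂ) - x) - regularizedQuotient h x μ
      = (ball x 1).indicator (fun _ => h x) μ / ((μ : ℂ) - x) := by
  rw [regularizedQuotient, ← sub_div, sub_sub_cancel]

/-- At `μ = x` both sides are `h x / z`, because of the junk value `regularizedQuotient h x x = 0`. -/
theorem div_sub_smul_regularizedQuotient (μ : ℝ) (z : ℂ) :
    h μ / z - (((μ : ℂ) - x) / z) • regularizedQuotient h x μ
      = (ball x 1).indicator (fun _ => h x) μ / z := by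
  rcases eq_or_ne μ x with rfl | hμ
  · simp [mem_ball_self one_pos]
  · have hμ' : (μ : ℂ) - x ≠ 0 := sub_ne_zero.mpr (Complex.ofReal_injective.ne hμ)
    rw [regularizedQuotient, smul_eq_mul]
    field_simp
    ring

theorem integral_indicator_ball_div (c : ℂ) (z : ℝ → ℂ) :
    ∫ μ, (ball x 1).indicator (fun _ => c) μ / z μ = c * ∫ μ in x - 1..x + 1, (z μ)⁻¹ := by
  have hind : ∀ μ, (ball x 1).indicator (fun _ => c) μ / z μ
      = (ball x 1).indicator (fun μ => c * (z μ)⁻¹) μ := by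
    intro μ
    by_cases hμ : μ ∈ ball x 1 <;> simp [hμ, div_eq_mul_inv]
  rw [integral_congr_ae (ae_of_all _ hind), integral_indicator measurableSet_ball,
    integral_const_mul, Real.ball_eq_Ioo, ← integral_Ioc_eq_integral_Ioo,
    intervalIntegral.integral_of_le (by linarith)]

theorem setIntegral_indicator_ball_div_eq_zero (c : ℂ) (δ : ℝ) :
    ∫ μ in {μ | δ < |μ - x|}, (ball x 1).indicator (fun _ => c) μ / ((μ : ℂ) - x) = 0 := by
  classical
  rw [← integral_indicator (measurableSet_lt measurable_const (by fun_prop))]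
  refine integral_eq_zero_of_apply_sub_eq_neg (2 * x) fun μ => ?_
  have hreflect : 2 * x - μ - x = -(μ - x) := by ring
  have hreflect' : ((2 * x - μ : ℝ) : ℂ) - x = -((μ : ℂ) - x) := by push_cast; ring
  have hball : 2 * x - μ ∈ ball x 1 ↔ μ ∈ ball x 1 := by
    simp only [mem_ball, Real.dist_eq, hreflect, abs_neg]
  simp only [indicator_apply, mem_ofPred_eq, hball, hreflect, abs_neg, hreflect', div_neg]
  split_ifs <;> simp


theorem integral_inv_sub_mul_I {ε : ℝ} (hε : ε ≠ 0) :
    ∫ μ in x - 1..x + 1, ((μ : ℂ) - x - ε * I)⁻¹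
      = Complex.log (1 - ε * I) - Complex.log (-1 - ε * I) := by
  have hslit : ∀ μ : ℝ, (μ : ℂ) - x - ε * I ∈ Complex.slitPlane := fun μ =>
    Complex.mem_slitPlane_iff.mpr (Or.inr (by simpa using hε))
  have hderiv : ∀ μ ∈ uIcc (x - 1) (x + 1),
      HasDerivAt (fun μ : ℝ => Complex.log ((μ : ℂ) - x - ε * I)) ((μ : ℂ) - x - ε * I)⁻¹ μ := by
    intro μ _
    simpa using ((((hasDerivAt_id μ).ofReal_comp).sub_const (x : ℂ)).sub_const (ε * I)).clog_real
      (hslit μ)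
  have hint : IntervalIntegrable (fun μ : ℝ => ((μ : ℂ) - x - ε * I)⁻¹) volume (x - 1) (x + 1) :=
    (Continuous.inv₀ (by fun_prop) fun μ => Complex.slitPlane_ne_zero (hslit μ)).intervalIntegrable
      _ _
  rw [intervalIntegral.integral_eq_sub_of_hasDerivAt hderiv hint]
  congr 2 <;> push_cast <;> ring

theorem tendsto_integral_inv_sub_mul_I :
    Tendsto (fun ε : ℝ => ∫ μ in x - 1..x + 1, ((μ : ℂ) - x - ε * I)⁻¹) (𝓝[>] 0) (𝓝 (π * I)) := by
  have hright : Tendsto (fun ε : ℝ => Complex.log (1 - ε * I)) (𝓝[>] 0) (𝓝 0) := by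
    simpa [Function.comp_def] using
      (continuousAt_clog (by simp : (1 : ℂ) ∈ Complex.slitPlane)).tendsto.comp (Complex.tendsto_sub_mul_I 1)
  have hleft : Tendsto (fun ε : ℝ => Complex.log (-1 - ε * I)) (𝓝[>] 0) (𝓝 (-(π * I))) := by
    have hbelow : Tendsto (fun ε : ℝ => -1 - ε * I) (𝓝[>] 0) (𝓝[{z | z.im < 0}] (-1)) := by
      refine tendsto_nhdsWithin_iff.mpr ⟨Complex.tendsto_sub_mul_I (-1), ?_⟩
      filter_upwards [self_mem_nhdsWithin] with ε (hε : 0 < ε)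
      simpa using hε
    simpa [Function.comp_def] using
      (Complex.tendsto_log_nhdsWithin_im_neg_of_re_neg_of_im_zero (z := -1)
      (by norm_num) (by norm_num)).comp hbelow
  have hlim := hright.sub hleft
  rw [zero_sub, neg_neg] at hlim
  refine hlim.congr' ?_
  filter_upwards [self_mem_nhdsWithin] with ε (hε : 0 < ε)
  exact (integral_inv_sub_mul_I x hε.ne').symm

variable {h x}

theorem tendsto_setIntegral_div_sub (hint : Integrable h) {K : NNReal} (hlip : LipschitzWith K h) :
    Tendsto (fun δ : ℝ => ∫ μ in {μ : ℝ | δ < |μ - x|}, h μ / ((μ : ℂ) - x)) (𝓝[>] 0)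
      (𝓝 (∫ μ, regularizedQuotient h x μ)) := by
  have hS : ∀ δ : ℝ, MeasurableSet {μ : ℝ | δ < |μ - x|} := fun δ =>
    measurableSet_lt measurable_const (by fun_prop)
  have hq := integrable_regularizedQuotient h x hint hlip
  have htrunc : Tendsto (fun δ : ℝ => ∫ μ, ({μ : ℝ | δ < |μ - x|}.indicator 1 μ : ℂ) •
      regularizedQuotient h x μ) (𝓝[>] 0) (𝓝 (∫ μ, regularizedQuotient h x μ)) := by
    refine tendsto_integral_smul_of_norm_le_one hq
      (Eventually.of_forall fun δ => (measurable_one.indicator (hS δ)).aestronglyMeasurable)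
      (Eventually.of_forall fun δ => ae_of_all _ fun μ => ?_) ?_
    · simpa using norm_indicator_le_norm_self (1 : ℝ → ℂ) μ
    · filter_upwards [compl_mem_ae_iff.mpr (measure_singleton x)] with μ hμ
      refine tendsto_const_nhds.congr' ?_
      filter_upwards [Ioo_mem_nhdsGT (abs_pos.mpr (sub_ne_zero.mpr hμ))] with δ hδ
      rw [indicator_of_mem (show μ ∈ {μ : ℝ | δ < |μ - x|} from hδ.2), Pi.one_apply]
  refine htrunc.congr' ?_
  filter_upwards [self_mem_nhdsWithin] with δ (hδ : 0 < δ)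
  have hf : IntegrableOn (fun μ => h μ / ((μ : ℂ) - x)) {μ | δ < |μ - x|} :=
    hint.integrableOn.div_of_le_norm (by fun_prop) hδ ((ae_restrict_iff' (hS δ)).mpr
      (ae_of_all _ fun μ hμ => by rw [Complex.norm_ofReal_sub_ofReal]; exact hμ.le))
  simp_rw [← indicator_smul_apply_left, Pi.one_apply, one_smul]
  rw [integral_indicator (hS δ), eq_comm, ← sub_eq_zero, ← integral_sub hf hq.integrableOn]
  simp_rw [div_sub_regularizedQuotient]
  exact setIntegral_indicator_ball_div_eq_zero x (h x) δ

theorem tendsto_integral_div_sub_sub_mul_I (hint : Integrable h) {K : NNReal}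
    (hlip : LipschitzWith K h) :
    Tendsto (fun ε : ℝ => ∫ μ, h μ / ((μ : ℂ) - x - ε * I)) (𝓝[>] 0)
      (𝓝 ((∫ μ, regularizedQuotient h x μ) + π * I * h x)) := by
  have hq := integrable_regularizedQuotient h x hint hlip
  have hw_le : ∀ ε μ : ℝ, ‖((μ : ℂ) - x) / ((μ : ℂ) - x - ε * I)‖ ≤ 1 := fun ε μ => by
    rw [norm_div]
    exact div_le_one_of_le₀ (Complex.norm_ofReal_sub_le_norm_sub_mul_I μ x ε) (norm_nonneg _)
  have hreg : Tendsto (fun ε : ℝ => ∫ μ : ℝ, (((μ : ℂ) - x) / ((μ : ℂ) - x - ε * I)) •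
      regularizedQuotient h x μ) (𝓝[>] 0) (𝓝 (∫ μ, regularizedQuotient h x μ)) := by
    refine tendsto_integral_smul_of_norm_le_one hq
      (Eventually.of_forall fun ε => (by fun_prop : Measurable fun μ : ℝ =>
        ((μ : ℂ) - x) / ((μ : ℂ) - x - ε * I)).aestronglyMeasurable)
      (Eventually.of_forall fun ε => ae_of_all _ (hw_le ε)) ?_
    filter_upwards [compl_mem_ae_iff.mpr (measure_singleton x)] with μ hμ
    have hne : (μ : ℂ) - x ≠ 0 := sub_ne_zero.mpr (Complex.ofReal_injective.ne hμ)
    rw [← div_self hne]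
    exact tendsto_const_nhds.div (Complex.tendsto_sub_mul_I _) hne
  have hsing := (tendsto_integral_inv_sub_mul_I x).const_mul (h x)
  rw [show (π : ℂ) * I * h x = h x * (π * I) by ring]
  refine (hreg.add hsing).congr' ?_
  filter_upwards [self_mem_nhdsWithin] with ε (hε : 0 < ε)
  have hf : Integrable fun μ : ℝ => h μ / ((μ : ℂ) - x - ε * I) :=
    hint.div_of_le_norm (by fun_prop) hε
      (ae_of_all _ fun μ => by simpa [abs_of_pos hε] using Complex.abs_le_norm_sub_mul_I μ x ε)
  have hwq : Integrable fun μ : ℝ => (((μ : ℂ) - x) / ((μ : ℂ) - x - ε * I)) •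
      regularizedQuotient h x μ := by
    refine hq.norm.mono' ((by fun_prop : Measurable fun μ : ℝ =>
      ((μ : ℂ) - x) / ((μ : ℂ) - x - ε * I)).aestronglyMeasurable.smul hq.1)
      (ae_of_all _ fun μ => ?_)
    rw [norm_smul]
    exact mul_le_of_le_one_left (norm_nonneg _) (hw_le ε μ)
  rw [eq_comm, ← sub_eq_iff_eq_add', ← integral_sub hf hwq]
  simp_rw [div_sub_smul_regularizedQuotient]
  exact integral_indicator_ball_div x (h x) _

end Plemelj

/-- Sokhotski–Plemelj boundary value formula: for a Schwartz function `h : ℝ → ℂ` and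
`x ∈ ℝ`, the principal value `L = pv∫ h(μ)/(μ−x) dμ` exists, and the Cauchy integrals
from the upper half-plane converge to `L + iπ h(x)` as `ε → 0⁺`. -/
theorem statement8 (h : SchwartzMap ℝ ℂ) (x : ℝ) :
    ∃ L : ℂ,
      Tendsto (fun δ : ℝ => ∫ μ in {μ : ℝ | δ < |μ - x|}, h μ / ((μ : ℂ) - (x : ℂ)))
        (𝓝[>] 0) (𝓝 L) ∧
      Tendsto (fun ε : ℝ =>
          ∫ μ : ℝ, h μ / ((μ : ℂ) - (x : ℂ) - (ε : ℂ) * Complex.I))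
        (𝓝[>] 0) (𝓝 (L + (Real.pi : ℂ) * Complex.I * h x)) := by
  obtain ⟨K, hlip⟩ := h.exists_lipschitzWith
  exact ⟨_, Plemelj.tendsto_setIntegral_div_sub h.integrable hlip,
    Plemelj.tendsto_integral_div_sub_sub_mul_I h.integrable hlip⟩
end

section
/- Let φ : ℝ → ℂ be a Schwartz function. Then for every t ∈ ℝ the principal value Pφ(t) = pv∫ φ(μ)/(μ−t) dμ exists and equals ∫₀^∞ (φ(t+u) − φ(t−u))/u du; moreover the function t ↦ Pφ(t) is differentiable on ℝ and its derivative is the principal value of the derivative: (Pφ)'(t) = P(φ')(t) for every t. -/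
/-!
Substituting `μ = t ± u` turns the integral over `{μ | δ < |μ - t|}` into
`∫ u in Ioi δ, (φ (t + u) - φ (t - u)) / u`. This integrand is bounded by twice the Lipschitz
constant of `φ` near `u = 0` and by `‖φ (t + u)‖ + ‖φ (t - u)‖` for `u ≥ 1`, so it is integrable
on `(0, ∞)` and the truncated integrals converge as `δ → 0⁺`. Its derivative in `t` is the same
quotient for `φ'`, which for `t` in a unit ball is dominated uniformly: by the Lipschitz bound of
`φ'` near `u = 0`, and by the decay `‖φ' y‖ ≤ C (1 + |y|)⁻²` away from it. Differentiating under
the integral sign gives `(Pφ)' = P(φ')`.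
-/

open Real MeasureTheory Filter Topology Set Metric
open scoped SchwartzMap

noncomputable def symmDiffQuot (f : ℝ → ℂ) (t u : ℝ) : ℂ := (f (t + u) - f (t - u)) / u

lemma norm_symmDiffQuot_le_of_lipschitzWith {f : ℝ → ℂ} {K : NNReal} (hf : LipschitzWith K f)
    (t u : ℝ) : ‖symmDiffQuot f t u‖ ≤ 2 * K := by
  rcases eq_or_ne u 0 with rfl | hu
  · simp [symmDiffQuot]
  have hu' : 0 < |u| := abs_pos.2 hu
  have h := hf.dist_le_mul (t + u) (t - u)
  rw [dist_eq_norm, Real.dist_eq, show t + u - (t - u) = 2 * u by ring, abs_mul, abs_two] at h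
  rw [symmDiffQuot, norm_div, Complex.norm_real, Real.norm_eq_abs, div_le_iff₀ hu']
  linarith

lemma norm_symmDiffQuot_le_of_one_le (f : ℝ → ℂ) (t : ℝ) {u : ℝ} (hu : 1 ≤ u) :
    ‖symmDiffQuot f t u‖ ≤ ‖f (t + u)‖ + ‖f (t - u)‖ := by
  rw [symmDiffQuot, norm_div, Complex.norm_real, Real.norm_eq_abs, abs_of_pos (by linarith)]
  exact (div_le_self (norm_nonneg _) hu).trans (norm_sub_le _ _)

lemma aestronglyMeasurable_symmDiffQuot {f : ℝ → ℂ} (hf : Continuous f) (t : ℝ) (μ : Measure ℝ) :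
    AEStronglyMeasurable (symmDiffQuot f t) μ := by
  have hnum : Continuous fun u => f (t + u) - f (t - u) := by fun_prop
  exact hnum.aestronglyMeasurable.div₀ Complex.continuous_ofReal.aestronglyMeasurable

lemma hasDerivAt_symmDiffQuot {f : ℝ → ℂ} (hf : Differentiable ℝ f) (x u : ℝ) :
    HasDerivAt (fun s => symmDiffQuot f s u) (symmDiffQuot (deriv f) x u) x :=
  (((hf (x + u)).hasDerivAt.comp_add_const x u).sub
    ((hf (x - u)).hasDerivAt.comp_sub_const x u)).div_const _

lemma integrableOn_div_of_lt_abs {f : ℝ → ℂ} (hf : Integrable f) {δ : ℝ} (hδ : 0 < δ) :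
    IntegrableOn (fun u : ℝ => f u / u) {u | δ < |u|} := by
  refine Integrable.mono' (hf.norm.div_const δ).integrableOn
    (hf.aestronglyMeasurable.div₀ Complex.continuous_ofReal.aestronglyMeasurable).restrict ?_
  refine (ae_restrict_iff' (measurableSet_lt measurable_const measurable_abs)).2
    (ae_of_all _ fun u (hu : δ < |u|) => ?_)
  rw [norm_div, Complex.norm_real, Real.norm_eq_abs]
  exact div_le_div_of_nonneg_left (norm_nonneg _) hδ hu.le

lemma setIntegral_lt_abs_eq_setIntegral_Ioi {E : Type*} [NormedAddCommGroup E] [NormedSpace ℝ E]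
    {g : ℝ → E} {δ : ℝ} (hδ : 0 ≤ δ) (hg : IntegrableOn g {u | δ < |u|}) :
    ∫ u in {u | δ < |u|}, g u = ∫ u in Ioi δ, (g u + g (-u)) := by
  have hsplit : {u : ℝ | δ < |u|} = Iio (-δ) ∪ Ioi δ := by
    ext u
    simp only [mem_ofPred_eq, mem_union, mem_Iio, mem_Ioi, lt_abs]
    constructor <;> rintro (h | h) <;> [right; left; right; left] <;> linarith
  have hneg : IntegrableOn g (Iio (-δ)) := hg.mono_set (hsplit ▸ subset_union_left)
  have hpos : IntegrableOn g (Ioi δ) := hg.mono_set (hsplit ▸ subset_union_right)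
  have hpos' : IntegrableOn (fun u => g (-u)) (Ioi δ) := by
    have := ((Measure.measurePreserving_neg volume).integrableOn_comp_preimage
      (Homeomorph.neg ℝ).measurableEmbedding).2 hneg
    simpa [Function.comp_def] using this
  have hdisj : Disjoint (Iio (-δ)) (Ioi δ) :=
    (Iic_disjoint_Ioi (by linarith)).mono_left Iio_subset_Iic_self
  rw [hsplit, setIntegral_union hdisj measurableSet_Ioi hneg hpos, integral_add hpos hpos', integral_comp_neg_Ioi, integral_Iic_eq_integral_Iio, add_comm]

lemma setIntegral_lt_abs_sub_div_eq {f : ℝ → ℂ} (hf : Integrable f) (t : ℝ) {δ : ℝ} (hδ : 0 < δ) :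
    ∫ μ in {μ : ℝ | δ < |μ - t|}, f μ / ((μ : ℂ) - (t : ℂ)) =
      ∫ u in Ioi δ, symmDiffQuot f t u := by
  have htrans := (measurePreserving_add_left volume t).setIntegral_preimage_emb
    (measurableEmbedding_addLeft t) (fun μ : ℝ => f μ / ((μ : ℂ) - (t : ℂ))) {μ | δ < |μ - t|}
  have hpre : (t + ·) ⁻¹' {μ : ℝ | δ < |μ - t|} = {u | δ < |u|} := by ext; simp
  simp only [hpre, Complex.ofReal_add, add_sub_cancel_left] at htrans
  rw [← htrans, setIntegral_lt_abs_eq_setIntegral_Ioi hδ.le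
    (integrableOn_div_of_lt_abs (hf.comp_add_left t) hδ)]
  refine setIntegral_congr_fun measurableSet_Ioi fun u _ => ?_
  simp only [symmDiffQuot, Complex.ofReal_neg, div_neg, ← sub_eq_add_neg, sub_div]

lemma integrableOn_symmDiffQuot {f : ℝ → ℂ} {K : NNReal} (hf : Integrable f)
    (hfK : LipschitzWith K f) (t : ℝ) : IntegrableOn (symmDiffQuot f t) (Ioi 0) := by
  have hmeas := aestronglyMeasurable_symmDiffQuot hfK.continuous t
  have hnear : IntegrableOn (symmDiffQuot f t) (Ioc 0 1) :=
    Measure.integrableOn_of_bounded measure_Ioc_lt_top.ne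
      (hmeas _) (ae_of_all _ (norm_symmDiffQuot_le_of_lipschitzWith hfK t))
  have hfar : IntegrableOn (symmDiffQuot f t) (Ioi 1) := by
    have hsub : Ioi (1 : ℝ) ⊆ {u | 1 < |u|} := fun u (hu : 1 < u) => hu.trans_le (le_abs_self u)
    have h := ((integrableOn_div_of_lt_abs (hf.comp_add_left t) one_pos).sub
      (integrableOn_div_of_lt_abs (hf.comp_sub_left t) one_pos)).mono_set hsub
    convert h using 1
    ext u
    simp only [symmDiffQuot, Pi.sub_apply, sub_div]
  rw [← Ioc_union_Ioi_eq_Ioi zero_le_one]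
  exact hnear.union hfar

lemma tendsto_setIntegral_Ioi_nhdsGT {E : Type*} [NormedAddCommGroup E] [NormedSpace ℝ E]
    {g : ℝ → E} {a : ℝ} (hg : IntegrableOn g (Ioi a)) :
    Tendsto (fun δ => ∫ u in Ioi δ, g u) (𝓝[>] a) (𝓝 (∫ u in Ioi a, g u)) := by
  have hind : ∀ᶠ δ in 𝓝[>] a, ∫ u in Ioi a, (Ioi δ).indicator g u = ∫ u in Ioi δ, g u := by
    filter_upwards [self_mem_nhdsWithin] with δ (hδ : a < δ)
    rw [setIntegral_indicator measurableSet_Ioi, Ioi_inter_Ioi, max_eq_right hδ.le]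
  refine Tendsto.congr' hind (tendsto_integral_filter_of_dominated_convergence (‖g ·‖)
    (Eventually.of_forall fun δ => hg.aestronglyMeasurable.indicator measurableSet_Ioi)
    (Eventually.of_forall fun δ => ae_of_all _ fun u => norm_indicator_le_norm_self g u)
    hg.norm ?_)
  refine (ae_restrict_iff' measurableSet_Ioi).2 (ae_of_all _ fun u (hu : a < u) => ?_)
  refine tendsto_const_nhds.congr' ?_
  filter_upwards [Ioo_mem_nhdsGT hu] with δ (hδ : δ ∈ Ioo a u)
  exact (indicator_of_mem (show u ∈ Ioi δ from hδ.2) g).symm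

lemma tendsto_setIntegral_lt_abs_sub_div {f : ℝ → ℂ} {K : NNReal} (hf : Integrable f)
    (hfK : LipschitzWith K f) (t : ℝ) :
    Tendsto (fun δ => ∫ μ in {μ : ℝ | δ < |μ - t|}, f μ / ((μ : ℂ) - (t : ℂ)))
      (𝓝[>] 0) (𝓝 (∫ u in Ioi 0, symmDiffQuot f t u)) := by
  refine (tendsto_setIntegral_Ioi_nhdsGT (integrableOn_symmDiffQuot hf hfK t)).congr' ?_
  filter_upwards [self_mem_nhdsWithin] with δ hδ
  exact (setIntegral_lt_abs_sub_div_eq hf t hδ).symm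

lemma inv_one_add_abs_sq_le {x y : ℝ} (h : |x - y| ≤ 1) :
    ((1 + |x|) ^ 2)⁻¹ ≤ 4 * ((1 + |y|) ^ 2)⁻¹ := by
  have hy : 1 + |y| ≤ 2 * (1 + |x|) := by
    have := abs_sub_abs_le_abs_sub y x
    rw [abs_sub_comm] at this
    linarith [abs_nonneg x]
  calc ((1 + |x|) ^ 2)⁻¹ = 4 * ((2 * (1 + |x|)) ^ 2)⁻¹ := by field_simp; ring
    _ ≤ 4 * ((1 + |y|) ^ 2)⁻¹ := by gcongr

lemma integrable_inv_one_add_abs_sq : Integrable fun y : ℝ => ((1 + |y|) ^ 2)⁻¹ := by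
  have h := integrable_one_add_norm (E := ℝ) (μ := volume) (r := 2) (by simp)
  refine h.congr (ae_of_all _ fun y => ?_)
  simp only [Real.norm_eq_abs]
  rw [Real.rpow_neg (by positivity), Real.rpow_two]

namespace SchwartzMap

variable {F : Type*} [NormedAddCommGroup F] [NormedSpace ℝ F]

lemma exists_lipschitzWith_s11 (φ : 𝓢(ℝ, F)) : ∃ K, LipschitzWith K φ := by
  refine ⟨(SchwartzMap.seminorm ℝ 0 0 (derivCLM ℝ F φ)).toNNReal,
    lipschitzWith_of_nnnorm_deriv_le φ.differentiable fun x => ?_⟩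
  rw [← NNReal.coe_le_coe, coe_nnnorm, Real.coe_toNNReal _ (apply_nonneg _ _),
    ← derivCLM_apply ℝ]
  exact norm_le_seminorm ℝ _ x

lemma exists_norm_le_inv_one_add_abs_sq (φ : 𝓢(ℝ, F)) :
    ∃ C, ∀ y, ‖φ y‖ ≤ C * ((1 + |y|) ^ 2)⁻¹ := by
  refine ⟨2 ^ 2 * (Finset.Iic (2, 0)).sup (fun m => SchwartzMap.seminorm ℝ m.1 m.2) φ,
    fun y => ?_⟩
  rw [le_mul_inv_iff₀ (by positivity), mul_comm]
  simpa using one_add_le_sup_seminorm_apply (𝕜 := ℝ) (m := (2, 0)) le_rfl le_rfl φ y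

end SchwartzMap

lemma norm_symmDiffQuot_le_of_decay {f : ℝ → ℂ} {K : NNReal} {C : ℝ} (hfK : LipschitzWith K f)
    (hfC : ∀ y, ‖f y‖ ≤ C * ((1 + |y|) ^ 2)⁻¹) {x t u : ℝ} (hxt : |x - t| ≤ 1) (hu : 0 < u) :
    ‖symmDiffQuot f x u‖ ≤ (Ioc 0 1).indicator (fun _ => 2 * (K : ℝ)) u +
      4 * C * (((1 + |t + u|) ^ 2)⁻¹ + ((1 + |t - u|) ^ 2)⁻¹) := by
  have hC : 0 ≤ C := by
    have := (norm_nonneg _).trans (hfC 0)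
    exact nonneg_of_mul_nonneg_left this (by positivity)
  by_cases hu1 : u ≤ 1
  · rw [indicator_of_mem (show u ∈ Ioc 0 1 from ⟨hu, hu1⟩)]
    have := norm_symmDiffQuot_le_of_lipschitzWith hfK x u
    have : 0 ≤ 4 * C * (((1 + |t + u|) ^ 2)⁻¹ + ((1 + |t - u|) ^ 2)⁻¹) := by positivity
    linarith
  · rw [indicator_of_notMem (fun h => hu1 h.2), zero_add]
    have hplus := inv_one_add_abs_sq_le (x := x + u) (y := t + u) (by simpa using hxt)
    have hminus := inv_one_add_abs_sq_le (x := x - u) (y := t - u) (by simpa using hxt)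
    calc ‖symmDiffQuot f x u‖ ≤ ‖f (x + u)‖ + ‖f (x - u)‖ :=
          norm_symmDiffQuot_le_of_one_le f x (not_le.1 hu1).le
      _ ≤ C * ((1 + |x + u|) ^ 2)⁻¹ + C * ((1 + |x - u|) ^ 2)⁻¹ := add_le_add (hfC _) (hfC _)
      _ ≤ C * (4 * ((1 + |t + u|) ^ 2)⁻¹) + C * (4 * ((1 + |t - u|) ^ 2)⁻¹) := by gcongr
      _ = _ := by ring

lemma hasDerivAt_integral_symmDiffQuot (φ : 𝓢(ℝ, ℂ)) (t : ℝ) :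
    HasDerivAt (fun s => ∫ u in Ioi 0, symmDiffQuot φ s u)
      (∫ u in Ioi 0, symmDiffQuot (deriv φ) t u) t := by
  -- `⇑ψ` is `deriv φ` by definition.
  set ψ := SchwartzMap.derivCLM ℝ ℂ φ
  obtain ⟨K, hφK⟩ := φ.exists_lipschitzWith_s11
  obtain ⟨K', hψK⟩ := ψ.exists_lipschitzWith_s11
  obtain ⟨C, hψC⟩ := ψ.exists_norm_le_inv_one_add_abs_sq
  let bound : ℝ → ℝ := fun u => (Ioc 0 1).indicator (fun _ => 2 * (K' : ℝ)) u +
    4 * C * (((1 + |t + u|) ^ 2)⁻¹ + ((1 + |t - u|) ^ 2)⁻¹)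
  have hbound : IntegrableOn bound (Ioi 0) :=
    (((integrable_indicator_iff measurableSet_Ioc).2 (integrableOn_const measure_Ioc_lt_top.ne)).add
      (((integrable_inv_one_add_abs_sq.comp_add_left t).add
        (integrable_inv_one_add_abs_sq.comp_sub_left t)).const_mul _)).integrableOn
  have hdom : ∀ᵐ u ∂volume.restrict (Ioi 0), ∀ x ∈ ball t 1, ‖symmDiffQuot ψ x u‖ ≤ bound u :=
    (ae_restrict_iff' measurableSet_Ioi).2 (ae_of_all _ fun u (hu : 0 < u) x hx =>
      norm_symmDiffQuot_le_of_decay hψK hψC (mem_ball_iff_norm.1 hx).le hu)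
  exact (hasDerivAt_integral_of_dominated_loc_of_deriv_le (ball_mem_nhds t one_pos)
    (Eventually.of_forall fun s => aestronglyMeasurable_symmDiffQuot φ.continuous s _)
    (integrableOn_symmDiffQuot φ.integrable hφK t)
    (aestronglyMeasurable_symmDiffQuot ψ.continuous t _) hdom hbound
    (ae_of_all _ fun u x _ => hasDerivAt_symmDiffQuot φ.differentiable x u)).2

/-- For a Schwartz function `φ : ℝ → ℂ`, the principal value
`Pφ(t) = pv∫ φ(μ)/(μ−t) dμ` exists for every `t` and equals
`∫₀^∞ (φ(t+u) − φ(t−u))/u du`; moreover `t ↦ Pφ(t)` is differentiable and its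
derivative is the principal value of the derivative: `(Pφ)' = P(φ')`. -/
theorem statement11 (φ : SchwartzMap ℝ ℂ) :
    ∃ P Q : ℝ → ℂ,
      (∀ t : ℝ,
        Tendsto (fun δ : ℝ => ∫ μ in {μ : ℝ | δ < |μ - t|}, φ μ / ((μ : ℂ) - (t : ℂ)))
          (𝓝[>] 0) (𝓝 (P t))) ∧
      (∀ t : ℝ, P t = ∫ u in Set.Ioi (0 : ℝ), (φ (t + u) - φ (t - u)) / (u : ℂ)) ∧
      (∀ t : ℝ,
        Tendsto (fun δ : ℝ =>
            ∫ μ in {μ : ℝ | δ < |μ - t|}, deriv (⇑φ) μ / ((μ : ℂ) - (t : ℂ)))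
          (𝓝[>] 0) (𝓝 (Q t))) ∧
      (∀ t : ℝ, HasDerivAt P (Q t) t) := by
  set ψ := SchwartzMap.derivCLM ℝ ℂ φ
  obtain ⟨K, hφK⟩ := φ.exists_lipschitzWith_s11
  obtain ⟨K', hψK⟩ := ψ.exists_lipschitzWith_s11
  exact ⟨fun t => ∫ u in Ioi 0, symmDiffQuot φ t u,
    fun t => ∫ u in Ioi 0, symmDiffQuot (deriv φ) t u,
    fun t => tendsto_setIntegral_lt_abs_sub_div φ.integrable hφK t, fun t => rfl,
    fun t => tendsto_setIntegral_lt_abs_sub_div ψ.integrable hψK t,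
    hasDerivAt_integral_symmDiffQuot φ⟩
end

section
/- Let h : ℝ → ℂ be a Schwartz function and let ξ ∈ ℂ with Im ξ > 0. For 0 < β < π/2, the integral B(β) = (1 + ξ² tan²β) ∫_{−cot β}^{cot β} h(μ) / [ (μ − ξ·√(1 − μ² tan²β)) · √(1 − μ² tan²β) ] dμ is well defined (the integrand is integrable on (−cot β, cot β)), and as β → 0⁺ it converges to the Cauchy transform: lim_{β→0⁺} B(β) = ∫_ℝ h(μ)/(μ−ξ) dμ. -/
/-!
Write `t = tan β`, so that `cot β = t⁻¹` and the integrand is `boundaryIntegrand h ξ t`,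
with `S = √(1 - μ²t²)`. Since `Im ξ > 0`, `‖μ - ξ S‖ ≥ c (S + |μ|)` for some `c > 0`.
On `|μ| < 1/(2t)` we have `S ≥ 1/2`, so the integrand is dominated by `(4/c) ‖h‖` and tends
pointwise to `h μ / (μ - ξ)`: dominated convergence. On `1/(2t) ≤ |μ| < 1/t` the decay
`‖h μ‖ ≤ C/μ² ≤ 4Ct²` bounds the integrand by `(8C/c) t² · t/S`, and `∫ t/S = π` (an arcsine),
so this part is `O(t²)`. The prefactor `1 + ξ² t²` tends to `1`.
-/

open Real MeasureTheory Filter Topology Set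

noncomputable def boundaryIntegrand (h : ℝ → ℂ) (ξ : ℂ) (t μ : ℝ) : ℂ :=
  h μ / (((μ : ℂ) - ξ * (√(1 - μ ^ 2 * t ^ 2) : ℂ)) * (√(1 - μ ^ 2 * t ^ 2) : ℂ))

lemma one_sub_mul_abs_le_sqrt {t : ℝ} (ht : 0 ≤ t) (μ : ℝ) :
    1 - t * |μ| ≤ √(1 - μ ^ 2 * t ^ 2) := by
  rcases le_or_gt (t * |μ|) 1 with hle | hgt
  · refine Real.le_sqrt_of_sq_le ?_
    have hsq : μ ^ 2 * t ^ 2 = (t * |μ|) ^ 2 := by rw [mul_pow, sq_abs, mul_comm]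
    nlinarith [mul_nonneg ht (abs_nonneg μ)]
  · linarith [Real.sqrt_nonneg (1 - μ ^ 2 * t ^ 2)]

lemma sqrt_one_sub_sq_mul_sq_pos {t μ : ℝ} (ht : 0 ≤ t) (hμ : t * |μ| < 1) :
    0 < √(1 - μ ^ 2 * t ^ 2) :=
  (sub_pos.2 hμ).trans_le (one_sub_mul_abs_le_sqrt ht μ)

lemma mem_Ioo_neg_inv_inv_iff {t : ℝ} (ht : 0 < t) (μ : ℝ) :
    μ ∈ Ioo (-t⁻¹) t⁻¹ ↔ t * |μ| < 1 := by
  rw [mem_Ioo, ← abs_lt, ← lt_inv_mul_iff₀ ht, mul_one]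

lemma Ioo_neg_inv_two_mul_subset {t : ℝ} (ht : 0 < t) :
    Ioo (-(2 * t)⁻¹) (2 * t)⁻¹ ⊆ Ioo (-t⁻¹) t⁻¹ :=
  have hle : (2 * t)⁻¹ ≤ t⁻¹ := inv_anti₀ ht (by linarith)
  Ioo_subset_Ioo (neg_le_neg hle) hle

lemma hasDerivAt_arcsin_mul {t μ : ℝ} (ht : 0 ≤ t) (hμ : t * |μ| < 1) :
    HasDerivAt (fun x => arcsin (t * x)) (t / √(1 - μ ^ 2 * t ^ 2)) μ := by
  have habs : |t * μ| < 1 := by rwa [abs_mul, abs_of_nonneg ht]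
  have hd := (hasDerivAt_arcsin (by linarith [neg_abs_le (t * μ)])
    (by linarith [le_abs_self (t * μ)])).comp μ ((hasDerivAt_id' μ).const_mul t)
  refine hd.congr_deriv ?_
  rw [mul_one, one_div_mul_eq_div, mul_pow, mul_comm (t ^ 2)]

lemma integrableOn_div_sqrt_one_sub_sq_mul_sq {t : ℝ} (ht : 0 < t) :
    IntegrableOn (fun μ => t / √(1 - μ ^ 2 * t ^ 2)) (Ioo (-t⁻¹) t⁻¹) :=
  (intervalIntegral.integrableOn_deriv_of_nonneg (by fun_prop)
    (fun μ hμ => hasDerivAt_arcsin_mul ht.le ((mem_Ioo_neg_inv_inv_iff ht μ).1 hμ))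
    (fun _ _ => by positivity)).mono_set Ioo_subset_Ioc_self

lemma integral_div_sqrt_one_sub_sq_mul_sq {t : ℝ} (ht : 0 < t) :
    ∫ μ in Ioo (-t⁻¹) t⁻¹, t / √(1 - μ ^ 2 * t ^ 2) = π := by
  have hle : -t⁻¹ ≤ t⁻¹ := neg_le_self (inv_nonneg.2 ht.le)
  rw [← integral_Ioc_eq_integral_Ioo, ← intervalIntegral.integral_of_le hle,
    intervalIntegral.integral_eq_sub_of_hasDerivAt_of_le hle (by fun_prop)
      (fun μ hμ => hasDerivAt_arcsin_mul ht.le ((mem_Ioo_neg_inv_inv_iff ht μ).1 hμ))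
      ((intervalIntegrable_iff_integrableOn_Ioo_of_le hle).2
        (integrableOn_div_sqrt_one_sub_sq_mul_sq ht)),
    mul_neg, mul_inv_cancel₀ ht.ne', arcsin_neg, arcsin_one]
  ring

-- `Im (μ - ξ s) = -s Im ξ` controls `s`, and then the triangle inequality controls `|μ|`.
lemma exists_pos_mul_add_abs_le_norm_sub {ξ : ℂ} (hξ : 0 < ξ.im) :
    ∃ c > 0, ∀ μ s : ℝ, 0 ≤ s → c * (s + |μ|) ≤ ‖(μ : ℂ) - ξ * s‖ := by
  refine ⟨ξ.im / (1 + ‖ξ‖ + ξ.im), by positivity, fun μ s hs => ?_⟩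
  have him : ξ.im * s ≤ ‖(μ : ℂ) - ξ * s‖ := by
    simpa [abs_of_nonneg (mul_nonneg hξ.le hs)] using Complex.abs_im_le_norm ((μ : ℂ) - ξ * s)
  have hre : |μ| ≤ ‖(μ : ℂ) - ξ * s‖ + ‖ξ‖ * s := by
    simpa [abs_of_nonneg hs] using norm_le_norm_sub_add (μ : ℂ) (ξ * s)
  rw [div_mul_eq_mul_div, div_le_iff₀ (by positivity)]
  nlinarith [mul_le_mul_of_nonneg_left hre hξ.le, mul_le_mul_of_nonneg_left him (norm_nonneg ξ)]

section BoundaryIntegrand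

variable {h : ℝ → ℂ} {ξ : ℂ}

lemma boundaryIntegrand_zero (h : ℝ → ℂ) (ξ : ℂ) (μ : ℝ) :
    boundaryIntegrand h ξ 0 μ = h μ / (μ - ξ) := by
  simp [boundaryIntegrand]

lemma aestronglyMeasurable_boundaryIntegrand {m : Measure ℝ} (hh : AEStronglyMeasurable h m)
    (ξ : ℂ) (t : ℝ) : AEStronglyMeasurable (boundaryIntegrand h ξ t) m :=
  hh.div₀ (by fun_prop : Continuous fun μ : ℝ =>
    ((μ : ℂ) - ξ * (√(1 - μ ^ 2 * t ^ 2) : ℂ)) * (√(1 - μ ^ 2 * t ^ 2) : ℂ)).aestronglyMeasurable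

lemma norm_boundaryIntegrand_le {c : ℝ} (hc : 0 < c)
    (hden : ∀ μ s : ℝ, 0 ≤ s → c * (s + |μ|) ≤ ‖(μ : ℂ) - ξ * s‖) {t μ : ℝ}
    (hS : 0 < √(1 - μ ^ 2 * t ^ 2)) :
    ‖boundaryIntegrand h ξ t μ‖ ≤
      ‖h μ‖ / (c * (√(1 - μ ^ 2 * t ^ 2) + |μ|) * √(1 - μ ^ 2 * t ^ 2)) := by
  rw [boundaryIntegrand, norm_div, norm_mul, Complex.norm_real, norm_of_nonneg hS.le]
  exact div_le_div_of_nonneg_left (norm_nonneg _) (by positivity)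
    (mul_le_mul_of_nonneg_right (hden μ _ hS.le) hS.le)

lemma norm_boundaryIntegrand_le_of_mem_Ioo {c : ℝ} (hc : 0 < c)
    (hden : ∀ μ s : ℝ, 0 ≤ s → c * (s + |μ|) ≤ ‖(μ : ℂ) - ξ * s‖) {t μ : ℝ} (ht : 0 < t)
    (hμ : μ ∈ Ioo (-(2 * t)⁻¹) (2 * t)⁻¹) :
    ‖boundaryIntegrand h ξ t μ‖ ≤ 4 / c * ‖h μ‖ := by
  rw [mem_Ioo_neg_inv_inv_iff (by positivity)] at hμ
  have hS : 1 / 2 ≤ √(1 - μ ^ 2 * t ^ 2) := by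
    linarith [one_sub_mul_abs_le_sqrt ht.le μ]
  have hden' : c / 4 ≤ c * (√(1 - μ ^ 2 * t ^ 2) + |μ|) * √(1 - μ ^ 2 * t ^ 2) :=
    calc c / 4 = c * (1 / 2) * (1 / 2) := by ring
      _ ≤ _ := by gcongr; linarith [abs_nonneg μ]
  calc ‖boundaryIntegrand h ξ t μ‖
      ≤ ‖h μ‖ / (c * (√(1 - μ ^ 2 * t ^ 2) + |μ|) * √(1 - μ ^ 2 * t ^ 2)) :=
        norm_boundaryIntegrand_le hc hden (by linarith)
    _ ≤ ‖h μ‖ / (c / 4) := div_le_div_of_nonneg_left (norm_nonneg _) (by positivity) hden'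
    _ = 4 / c * ‖h μ‖ := by ring

lemma norm_boundaryIntegrand_le_of_mem_diff {c C : ℝ} (hc : 0 < c)
    (hden : ∀ μ s : ℝ, 0 ≤ s → c * (s + |μ|) ≤ ‖(μ : ℂ) - ξ * s‖) {t μ : ℝ} (ht : 0 < t)
    (hdecay : ‖μ‖ ^ 2 * ‖h μ‖ ≤ C) (hμ : μ ∈ Ioo (-t⁻¹) t⁻¹ \ Ioo (-(2 * t)⁻¹) (2 * t)⁻¹) :
    ‖boundaryIntegrand h ξ t μ‖ ≤ 8 * C / c * t ^ 2 * (t / √(1 - μ ^ 2 * t ^ 2)) := by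
  obtain ⟨hμ₂, hμ₁⟩ := hμ
  rw [mem_Ioo_neg_inv_inv_iff ht] at hμ₂
  rw [mem_Ioo_neg_inv_inv_iff (by positivity), not_lt] at hμ₁
  have hS := sqrt_one_sub_sq_mul_sq_pos ht.le hμ₂
  have hμ : 1 ≤ 4 * t ^ 2 * ‖μ‖ ^ 2 := by
    rw [norm_eq_abs]; nlinarith [one_le_pow₀ (n := 2) hμ₁]
  have hh : ‖h μ‖ ≤ 4 * t ^ 2 * C :=
    calc ‖h μ‖ ≤ 4 * t ^ 2 * ‖μ‖ ^ 2 * ‖h μ‖ := le_mul_of_one_le_left (norm_nonneg _) hμ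
      _ = 4 * t ^ 2 * (‖μ‖ ^ 2 * ‖h μ‖) := by ring
      _ ≤ 4 * t ^ 2 * C := by gcongr
  have hden' : c / (2 * t) * √(1 - μ ^ 2 * t ^ 2) ≤
      c * (√(1 - μ ^ 2 * t ^ 2) + |μ|) * √(1 - μ ^ 2 * t ^ 2) := by
    gcongr
    rw [div_le_iff₀ (by positivity)]
    nlinarith [mul_le_mul_of_nonneg_left hμ₁ hc.le, mul_pos (mul_pos hc hS) ht]
  calc ‖boundaryIntegrand h ξ t μ‖
      ≤ ‖h μ‖ / (c * (√(1 - μ ^ 2 * t ^ 2) + |μ|) * √(1 - μ ^ 2 * t ^ 2)) :=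
        norm_boundaryIntegrand_le hc hden hS
    _ ≤ 4 * t ^ 2 * C / (c / (2 * t) * √(1 - μ ^ 2 * t ^ 2)) :=
        div_le_div₀ ((norm_nonneg _).trans hh) hh (by positivity) hden'
    _ = 8 * C / c * t ^ 2 * (t / √(1 - μ ^ 2 * t ^ 2)) := by
        field_simp
        ring

lemma integrableOn_boundaryIntegrand_Ioo_neg_inv_two_mul (hξ : 0 < ξ.im) (hh : Integrable h)
    {t : ℝ} (ht : 0 < t) :
    IntegrableOn (boundaryIntegrand h ξ t) (Ioo (-(2 * t)⁻¹) (2 * t)⁻¹) := by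
  obtain ⟨c, hc, hden⟩ := exists_pos_mul_add_abs_le_norm_sub hξ
  exact (hh.norm.const_mul (4 / c)).integrableOn.mono'
    (aestronglyMeasurable_boundaryIntegrand hh.1.restrict ξ t)
    (ae_restrict_of_forall_mem measurableSet_Ioo fun μ hμ =>
      norm_boundaryIntegrand_le_of_mem_Ioo hc hden ht hμ)

lemma integrableOn_boundaryIntegrand_diff {C : ℝ} (hξ : 0 < ξ.im)
    (hh : AEStronglyMeasurable h volume) (hdecay : ∀ μ : ℝ, ‖μ‖ ^ 2 * ‖h μ‖ ≤ C)
    {t : ℝ} (ht : 0 < t) :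
    IntegrableOn (boundaryIntegrand h ξ t) (Ioo (-t⁻¹) t⁻¹ \ Ioo (-(2 * t)⁻¹) (2 * t)⁻¹) := by
  obtain ⟨c, hc, hden⟩ := exists_pos_mul_add_abs_le_norm_sub hξ
  exact (((integrableOn_div_sqrt_one_sub_sq_mul_sq ht).mono_set sdiff_subset).const_mul _).mono'
    (aestronglyMeasurable_boundaryIntegrand hh.restrict ξ t)
    (ae_restrict_of_forall_mem (measurableSet_Ioo.diff measurableSet_Ioo) fun μ hμ =>
      norm_boundaryIntegrand_le_of_mem_diff hc hden ht (hdecay μ) hμ)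

lemma integrableOn_boundaryIntegrand {C : ℝ} (hξ : 0 < ξ.im) (hh : Integrable h)
    (hdecay : ∀ μ : ℝ, ‖μ‖ ^ 2 * ‖h μ‖ ≤ C) {t : ℝ} (ht : 0 < t) :
    IntegrableOn (boundaryIntegrand h ξ t) (Ioo (-t⁻¹) t⁻¹) := by
  rw [← union_sdiff_cancel (Ioo_neg_inv_two_mul_subset ht)]
  exact (integrableOn_boundaryIntegrand_Ioo_neg_inv_two_mul hξ hh ht).union
    (integrableOn_boundaryIntegrand_diff hξ hh.1 hdecay ht)

lemma continuousAt_boundaryIntegrand_zero (hξ : 0 < ξ.im) (μ : ℝ) :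
    ContinuousAt (fun t => boundaryIntegrand h ξ t μ) 0 := by
  have hne : (μ : ℂ) - ξ ≠ 0 := fun h0 => by simpa [hξ.ne'] using congrArg Complex.im h0
  exact continuousAt_const.div (by fun_prop) (by simpa using hne)

lemma tendsto_setIntegral_boundaryIntegrand_Ioo_neg_inv_two_mul (hξ : 0 < ξ.im)
    (hh : Integrable h) :
    Tendsto (fun t => ∫ μ in Ioo (-(2 * t)⁻¹) (2 * t)⁻¹, boundaryIntegrand h ξ t μ)
      (𝓝[>] 0) (𝓝 (∫ μ, h μ / (μ - ξ))) := by
  obtain ⟨c, hc, hden⟩ := exists_pos_mul_add_abs_le_norm_sub hξ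
  simp only [← integral_indicator measurableSet_Ioo]
  refine tendsto_integral_filter_of_dominated_convergence (fun μ => 4 / c * ‖h μ‖)
    (Eventually.of_forall fun t =>
      (aestronglyMeasurable_boundaryIntegrand hh.1 ξ t).indicator measurableSet_Ioo)
    ?_ (hh.norm.const_mul _) (Eventually.of_forall fun μ => ?_)
  · filter_upwards [self_mem_nhdsWithin] with t (ht : 0 < t)
    refine Eventually.of_forall fun μ => ?_
    rw [norm_indicator_eq_indicator_norm]
    exact indicator_le' (fun μ hμ => norm_boundaryIntegrand_le_of_mem_Ioo hc hden ht hμ)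
      (fun _ _ => by positivity) μ
  · have hsmall : ∀ᶠ t in 𝓝[>] (0 : ℝ), 2 * t * |μ| < 1 :=
      ((by fun_prop : Continuous fun t : ℝ => 2 * t * |μ|).tendsto' 0 0 (by simp)).mono_left
        nhdsWithin_le_nhds |>.eventually_lt_const one_pos
    refine (boundaryIntegrand_zero h ξ μ ▸
      (continuousAt_boundaryIntegrand_zero hξ μ).tendsto.mono_left nhdsWithin_le_nhds).congr' ?_
    filter_upwards [self_mem_nhdsWithin, hsmall] with t (ht : 0 < t) hμ
    exact (indicator_of_mem ((mem_Ioo_neg_inv_inv_iff (by positivity) μ).2 hμ) _).symm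

lemma tendsto_setIntegral_boundaryIntegrand_diff {C : ℝ} (hξ : 0 < ξ.im)
    (hdecay : ∀ μ : ℝ, ‖μ‖ ^ 2 * ‖h μ‖ ≤ C) :
    Tendsto (fun t => ∫ μ in Ioo (-t⁻¹) t⁻¹ \ Ioo (-(2 * t)⁻¹) (2 * t)⁻¹,
      boundaryIntegrand h ξ t μ) (𝓝[>] 0) (𝓝 0) := by
  obtain ⟨c, hc, hden⟩ := exists_pos_mul_add_abs_le_norm_sub hξ
  have hC : 0 ≤ C := by simpa using hdecay 0
  refine squeeze_zero_norm' (a := fun t => 8 * C / c * π * t ^ 2) ?_ ?_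
  · filter_upwards [self_mem_nhdsWithin] with t (ht : 0 < t)
    have hg : IntegrableOn (fun μ => 8 * C / c * t ^ 2 * (t / √(1 - μ ^ 2 * t ^ 2)))
        (Ioo (-t⁻¹) t⁻¹) := (integrableOn_div_sqrt_one_sub_sq_mul_sq ht).const_mul _
    calc ‖∫ μ in Ioo (-t⁻¹) t⁻¹ \ Ioo (-(2 * t)⁻¹) (2 * t)⁻¹, boundaryIntegrand h ξ t μ‖
        ≤ ∫ μ in Ioo (-t⁻¹) t⁻¹ \ Ioo (-(2 * t)⁻¹) (2 * t)⁻¹,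
            8 * C / c * t ^ 2 * (t / √(1 - μ ^ 2 * t ^ 2)) :=
          norm_integral_le_of_norm_le (hg.mono_set sdiff_subset)
            (ae_restrict_of_forall_mem (measurableSet_Ioo.diff measurableSet_Ioo) fun μ hμ =>
              norm_boundaryIntegrand_le_of_mem_diff hc hden ht (hdecay μ) hμ)
      _ ≤ ∫ μ in Ioo (-t⁻¹) t⁻¹, 8 * C / c * t ^ 2 * (t / √(1 - μ ^ 2 * t ^ 2)) :=
          setIntegral_mono_set hg (ae_of_all _ fun μ => by positivity) sdiff_subset.eventuallyLE
      _ = 8 * C / c * π * t ^ 2 := by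
          rw [integral_const_mul, integral_div_sqrt_one_sub_sq_mul_sq ht]; ring
  · simpa using ((by fun_prop : Continuous fun t : ℝ => 8 * C / c * π * t ^ 2).tendsto 0
      |>.mono_left nhdsWithin_le_nhds)

theorem tendsto_setIntegral_boundaryIntegrand {C : ℝ} (hξ : 0 < ξ.im) (hh : Integrable h)
    (hdecay : ∀ μ : ℝ, ‖μ‖ ^ 2 * ‖h μ‖ ≤ C) :
    Tendsto (fun t => ∫ μ in Ioo (-t⁻¹) t⁻¹, boundaryIntegrand h ξ t μ)
      (𝓝[>] 0) (𝓝 (∫ μ, h μ / (μ - ξ))) := by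
  have hsplit : ∀ᶠ t in 𝓝[>] (0 : ℝ),
      (∫ μ in Ioo (-(2 * t)⁻¹) (2 * t)⁻¹, boundaryIntegrand h ξ t μ) +
        (∫ μ in Ioo (-t⁻¹) t⁻¹ \ Ioo (-(2 * t)⁻¹) (2 * t)⁻¹, boundaryIntegrand h ξ t μ) =
      ∫ μ in Ioo (-t⁻¹) t⁻¹, boundaryIntegrand h ξ t μ := by
    filter_upwards [self_mem_nhdsWithin] with t (ht : 0 < t)
    rw [← setIntegral_union disjoint_sdiff_right (measurableSet_Ioo.diff measurableSet_Ioo)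
      (integrableOn_boundaryIntegrand_Ioo_neg_inv_two_mul hξ hh ht)
      (integrableOn_boundaryIntegrand_diff hξ hh.1 hdecay ht),
      union_sdiff_cancel (Ioo_neg_inv_two_mul_subset ht)]
  simpa using ((tendsto_setIntegral_boundaryIntegrand_Ioo_neg_inv_two_mul hξ hh).add
    (tendsto_setIntegral_boundaryIntegrand_diff hξ hdecay)).congr' hsplit

end BoundaryIntegrand

lemma tendsto_tan_nhdsWithin_Ioo_nhdsGT :
    Tendsto tan (𝓝[Ioo 0 (π / 2)] 0) (𝓝[>] 0) := by
  refine tendsto_nhdsWithin_iff.2 ⟨?_, ?_⟩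
  · simpa using ((continuousAt_tan (x := 0)).2 (by simp)).tendsto.mono_left nhdsWithin_le_nhds
  · filter_upwards [self_mem_nhdsWithin] with β hβ using tan_pos_of_pos_of_lt_pi_div_two hβ.1 hβ.2

lemma cot_eq_inv_tan (β : ℝ) : cot β = (tan β)⁻¹ := by
  rw [cot_eq_cos_div_sin, tan_eq_sin_div_cos, inv_div]

/-- For a Schwartz function `h : ℝ → ℂ` and `ξ` in the open upper half-plane, the
boundary integral
`B(β) = (1 + ξ² tan²β) ∫_{−cot β}^{cot β} h(μ)/[(μ − ξ√(1−μ²tan²β))·√(1−μ²tan²β)] dμ`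
is well defined for `0 < β < π/2` and converges to the Cauchy transform
`∫_ℝ h(μ)/(μ−ξ) dμ` as `β → 0⁺`. -/
theorem statement15 (h : SchwartzMap ℝ ℂ) (ξ : ℂ) (hξ : 0 < ξ.im) :
    (∀ β ∈ Set.Ioo (0 : ℝ) (Real.pi / 2),
      IntegrableOn
        (fun μ : ℝ => h μ /
          (((μ : ℂ) - ξ * (Real.sqrt (1 - μ ^ 2 * Real.tan β ^ 2) : ℂ)) *
            (Real.sqrt (1 - μ ^ 2 * Real.tan β ^ 2) : ℂ)))
        (Set.Ioo (-Real.cot β) (Real.cot β))) ∧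
    Tendsto (fun β : ℝ =>
        (1 + ξ ^ 2 * (Real.tan β : ℂ) ^ 2) *
          ∫ μ in Set.Ioo (-Real.cot β) (Real.cot β),
            h μ /
              (((μ : ℂ) - ξ * (Real.sqrt (1 - μ ^ 2 * Real.tan β ^ 2) : ℂ)) *
                (Real.sqrt (1 - μ ^ 2 * Real.tan β ^ 2) : ℂ)))
      (𝓝[Set.Ioo (0 : ℝ) (Real.pi / 2)] 0)
      (𝓝 (∫ μ : ℝ, h μ / ((μ : ℂ) - ξ))) := by
  have hdecay := h.norm_pow_mul_le_seminorm ℝ 2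
  simp only [cot_eq_inv_tan]
  refine ⟨fun β hβ => integrableOn_boundaryIntegrand hξ h.integrable hdecay
    (tan_pos_of_pos_of_lt_pi_div_two hβ.1 hβ.2), ?_⟩
  have htan : Tendsto (fun β => (tan β : ℂ)) (𝓝[Ioo 0 (π / 2)] 0) (𝓝 0) := by
    have h0 := (Complex.continuous_ofReal.tendsto 0).comp
      (tendsto_tan_nhdsWithin_Ioo_nhdsGT.mono_right nhdsWithin_le_nhds)
    rwa [Complex.ofReal_zero] at h0
  have hcoef : Tendsto (fun β => 1 + ξ ^ 2 * (tan β : ℂ) ^ 2) (𝓝[Ioo 0 (π / 2)] 0) (𝓝 1) := by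
    simpa using ((htan.pow 2).const_mul (ξ ^ 2)).const_add 1
  have hlim := hcoef.mul ((tendsto_setIntegral_boundaryIntegrand hξ h.integrable hdecay).comp
    tendsto_tan_nhdsWithin_Ioo_nhdsGT)
  rwa [one_mul] at hlim
end

section
/- Let f : ℝ² → ℝ be continuously differentiable, axisymmetric, and supported in the closed ball of radius R > 0 (f(x₁,x₂) = 0 whenever x₁² + x₂² > R²). Fix c₁ ∈ ℝ and define ν₀(s) = (1/2)∫₀^s (s−t) · (∂f/∂x₂)(t, c₁) dt, the solution of the null-geodesic equation ν'' (s) = (1/2)(∂f/∂x₂)(s, c₁) with ν₀(0) = ν₀'(0) = 0. Then ν₀ is an even function, ν₀(−s) = ν₀(s) for all s ∈ ℝ, and there exist constants A₁, A₂ ∈ ℝ such that ν₀(s) = A₁|s| + A₂ for every s with |s| > R. -/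
/-!
Rotation invariance forces `f` to depend only on `x₁² + x₂²`, so `f` and hence `∂₂f(·, c₁)` are
invariant under `x₁ ↦ -x₁`; with an even integrand, `ν₀` is even. For `s > R` the integrand
vanishes on `[R, s]`, so `ν₀ s = ½ (s ∫₀^R ∂₂f - ∫₀^R t ∂₂f)` is affine in `s`, and evenness
carries this over to `s < -R`.
-/

open Real MeasureTheory

namespace Axisym

variable {f : ℝ × ℝ → ℝ}

theorem apply_eq_of_sq_add_sq_eq (hax : Axisym f) {x₁ x₂ y₁ y₂ : ℝ}
    (h : x₁ ^ 2 + x₂ ^ 2 = y₁ ^ 2 + y₂ ^ 2) : f (x₁, x₂) = f (y₁, y₂) := by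
  set z : ℂ := ⟨x₁, x₂⟩
  set w : ℂ := ⟨y₁, y₂⟩
  rcases eq_or_ne z 0 with hz | hz
  · have hx : x₁ = 0 ∧ x₂ = 0 := by simpa [z, Complex.ext_iff] using hz
    obtain ⟨rfl, rfl⟩ := hx
    have hy₁ : y₁ = 0 := by nlinarith [sq_nonneg y₁, sq_nonneg y₂]
    have hy₂ : y₂ = 0 := by nlinarith [sq_nonneg y₁, sq_nonneg y₂]
    rw [hy₁, hy₂]
  -- rotating `z` by the angle of `w / z`, a complex number of modulus one, yields `w`
  have hnorm : ‖z‖ = ‖w‖ := by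
    rw [← sq_eq_sq₀ (norm_nonneg _) (norm_nonneg _), Complex.sq_norm, Complex.sq_norm,
      Complex.normSq_mk, Complex.normSq_mk]
    linarith
  have hu : ‖w / z‖ = 1 := by rw [norm_div, hnorm, div_self (hnorm ▸ norm_ne_zero_iff.2 hz)]
  have hu0 : w / z ≠ 0 := by rw [← norm_ne_zero_iff, hu]; exact one_ne_zero
  have hzw : z * (w / z) = w := mul_div_cancel₀ w hz
  have := hax (w / z).arg x₁ x₂
  rw [Complex.cos_arg hu0, Complex.sin_arg, hu, div_one, div_one] at this
  rw [← this]
  congr 1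
  simpa [Complex.ext_iff, z, w] using hzw

theorem comp_neg_fst (hax : Axisym f) (x₁ x₂ : ℝ) : f (-x₁, x₂) = f (x₁, x₂) :=
  hax.apply_eq_of_sq_add_sq_eq (by ring)

theorem even_fderiv_apply_snd (hax : Axisym f) (c : ℝ) :
    Function.Even fun t => fderiv ℝ f (t, c) (0, 1) := by
  intro t
  let σ : (ℝ × ℝ) ≃L[ℝ] (ℝ × ℝ) :=
    (ContinuousLinearEquiv.neg ℝ).prodCongr (ContinuousLinearEquiv.refl ℝ ℝ)
  have hσ : f ∘ σ = f := funext fun x => hax.comp_neg_fst x.1 x.2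
  have h := σ.comp_right_fderiv (f := f) (x := (t, c))
  rw [hσ] at h
  simpa [σ] using (DFunLike.congr_fun h (0, 1)).symm

end Axisym

theorem fderiv_eq_zero_of_sq_add_sq_gt {f : ℝ × ℝ → ℝ} {R : ℝ}
    (hsupp : ∀ x : ℝ × ℝ, x.1 ^ 2 + x.2 ^ 2 > R ^ 2 → f x = 0) {x : ℝ × ℝ}
    (hx : R ^ 2 < x.1 ^ 2 + x.2 ^ 2) : fderiv ℝ f x = 0 := by
  apply fderiv_of_notMem_tsupport
  have hclosed : IsClosed {x : ℝ × ℝ | x.1 ^ 2 + x.2 ^ 2 ≤ R ^ 2} :=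
    isClosed_le (by fun_prop) continuous_const
  have hsub : tsupport f ⊆ {x : ℝ × ℝ | x.1 ^ 2 + x.2 ^ 2 ≤ R ^ 2} :=
    closure_minimal (fun y hy => not_lt.1 fun h => hy (hsupp y h)) hclosed
  exact fun h => (hsub h).not_gt hx

section

variable {g : ℝ → ℝ}

theorem integral_sub_mul_neg_eq (hg : Function.Even g) (s : ℝ) :
    ∫ t in (0 : ℝ)..-s, (-s - t) * g t = ∫ t in (0 : ℝ)..s, (s - t) * g t := by
  have h := intervalIntegral.integral_comp_neg (a := 0) (b := s) fun t => (-s - t) * g t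
  rw [neg_zero] at h
  rw [intervalIntegral.integral_symm, ← h, ← intervalIntegral.integral_neg]
  refine intervalIntegral.integral_congr fun t _ => ?_
  simp only [hg t]
  ring

theorem integral_sub_mul_eq_of_vanishing (hg : Continuous g) {R s : ℝ} (hRs : R ≤ s)
    (h0 : ∀ t, R < t → g t = 0) :
    ∫ t in (0 : ℝ)..s, (s - t) * g t =
      s * (∫ t in (0 : ℝ)..R, g t) - ∫ t in (0 : ℝ)..R, t * g t := by
  have hint : ∀ a b : ℝ, IntervalIntegrable (fun t => (s - t) * g t) volume a b :=
    fun a b => (by fun_prop : Continuous fun t => (s - t) * g t).intervalIntegrable a b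
  have htail : ∫ t in R..s, (s - t) * g t = 0 := by
    rw [intervalIntegral.integral_of_le hRs]
    exact setIntegral_eq_zero_of_forall_eq_zero fun t ht => by rw [h0 t ht.1, mul_zero]
  rw [← intervalIntegral.integral_add_adjacent_intervals (hint 0 R) (hint R s), htail, add_zero,
    ← intervalIntegral.integral_const_mul, ← intervalIntegral.integral_sub
      ((hg.const_mul s).intervalIntegrable 0 R)
      ((by fun_prop : Continuous fun t => t * g t).intervalIntegrable 0 R)]
  refine intervalIntegral.integral_congr fun t _ => ?_
  ring

end

/-- Let `f` be `C¹`, axisymmetric and supported in the closed ball of radius `R > 0`, and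
let `ν₀(s) = (1/2)∫₀^s (s−t)·(∂f/∂x₂)(t,c₁) dt` be the solution of the null-geodesic
equation `ν'' = (1/2)(∂f/∂x₂)(s,c₁)` with `ν₀(0) = ν₀'(0) = 0`.  Then `ν₀` is even, and
outside the support (`|s| > R`) it is affine in `|s|`: `ν₀(s) = A₁|s| + A₂`. -/
theorem statement17 (f : ℝ × ℝ → ℝ) (hf : ContDiff ℝ 1 f) (hax : Axisym f)
    (R : ℝ) (hR : 0 < R)
    (hsupp : ∀ x : ℝ × ℝ, x.1 ^ 2 + x.2 ^ 2 > R ^ 2 → f x = 0) (c₁ : ℝ) :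
    let ν₀ : ℝ → ℝ := fun s =>
      (1 / 2) * ∫ t in (0 : ℝ)..s, (s - t) * fderiv ℝ f (t, c₁) (0, 1)
    (∀ s : ℝ, ν₀ (-s) = ν₀ s) ∧
    ∃ A₁ A₂ : ℝ, ∀ s : ℝ, |s| > R → ν₀ s = A₁ * |s| + A₂ := by
  intro ν₀
  set g : ℝ → ℝ := fun t => fderiv ℝ f (t, c₁) (0, 1)
  have hg : Continuous g :=
    ((hf.continuous_fderiv one_ne_zero).comp (by fun_prop)).clm_apply continuous_const
  have hg0 : ∀ t, R < t → g t = 0 := fun t ht => by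
    have hx : R ^ 2 < t ^ 2 + c₁ ^ 2 := by nlinarith [sq_nonneg c₁]
    simp only [g, fderiv_eq_zero_of_sq_add_sq_gt hsupp (x := (t, c₁)) hx, zero_apply]
  have heven : ∀ s, ν₀ (-s) = ν₀ s := fun s =>
    congrArg (1 / 2 * ·) (integral_sub_mul_neg_eq (hax.even_fderiv_apply_snd c₁) s)
  set A₁ := 1 / 2 * ∫ t in (0 : ℝ)..R, g t
  set A₂ := -(1 / 2 * ∫ t in (0 : ℝ)..R, t * g t)
  have hpos : ∀ s, R < s → ν₀ s = A₁ * s + A₂ := fun s hs => by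
    show 1 / 2 * ∫ t in (0 : ℝ)..s, (s - t) * g t = _
    rw [integral_sub_mul_eq_of_vanishing hg hs.le hg0]
    ring
  refine ⟨heven, A₁, A₂, fun s hs => ?_⟩
  rcases le_or_gt 0 s with h | h
  · rw [abs_of_nonneg h] at hs ⊢
    exact hpos s hs
  · rw [abs_of_neg h] at hs ⊢
    rw [← heven s]
    exact hpos (-s) hs
end
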